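/- arXiv:1502.05229 — 3 statements merged into one kernel-verified Lean document; each statement's English description precedes it below -/
import Mathlib

section
/- Let $H_A$ be a densely defined symmetric operator on a complex separable Hilbert space $\mathcal{H}_A$, and let $H_B$ be a bounded self-adjoint operator on a finite-dimensional Hilbert space $\mathcal{H}_B$ with orthonormal eigenbasis. Then the deficiency spaces of $H_{AB} = H_A \otimes \mathbb{I} + \mathbb{I} \otimes H_B$ on $\mathcal{H}_A \otimes \mathcal{H}_B$ satisfy $\mathcal{N}_{AB\pm} \simeq \mathcal{N}_{A\pm} \otimes \mathcal{H}_B$ (as Hilbert spaces). -/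
set_option synthInstance.maxHeartbeats 1000000
open ComplexInnerProductSpace

variable {E : Type*} [NormedAddCommGroup E] [InnerProductSpace ℂ E] [CompleteSpace E]

/-- The deficiency-type subspace `ker(T† - c·𝕀)` of a densely defined operator `T`. -/
noncomputable def deficiencySubspace (T : E →ₗ.[ℂ] E) (c : ℂ) : Submodule ℂ E where
  carrier := {x | ∃ h : x ∈ T.adjoint.domain, T.adjoint ⟨x, h⟩ = c • x}
  add_mem' := by
    rintro a b ⟨ha, hA⟩ ⟨hb, hB⟩
    refine ⟨T.adjoint.domain.add_mem ha hb, ?_⟩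
    show T.adjoint (⟨a, ha⟩ + ⟨b, hb⟩) = c • (a + b)
    rw [T.adjoint.map_add, hA, hB, smul_add]
  zero_mem' := by
    refine ⟨T.adjoint.domain.zero_mem, ?_⟩
    show T.adjoint 0 = c • (0 : E)
    rw [T.adjoint.map_zero, smul_zero]
  smul_mem' := by
    rintro t x ⟨hx, hX⟩
    refine ⟨T.adjoint.domain.smul_mem t hx, ?_⟩
    show T.adjoint (t • ⟨x, hx⟩) = c • t • x
    rw [T.adjoint.map_smul, hX, smul_comm]

instance piLp_completeSpace {n : ℕ} {HA : Type*} [NormedAddCommGroup HA]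
    [InnerProductSpace ℂ HA] [CompleteSpace HA] :
    CompleteSpace (PiLp 2 fun _ : Fin n => HA) :=
  inferInstance


set_option maxHeartbeats 1000000
set_option linter.unusedSectionVars false
set_option linter.unnecessarySimpa false

namespace DefProofAux

open Complex LinearPMap TopologicalSpace



/-- range of `T - z` -/
noncomputable def rng (T : E →ₗ.[ℂ] E) (z : ℂ) : Submodule ℂ E :=
  LinearMap.range (T.toFun - z • T.domain.subtype)

lemma mem_rng_orth_iff (T : E →ₗ.[ℂ] E) (z : ℂ) (y : E) :
    y ∈ (rng T z)ᗮ ↔ ∀ u : T.domain, ⟪(T u : E) - z • (u : E), y⟫ = 0 := by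
  rw [Submodule.mem_orthogonal]
  constructor
  · intro h u
    exact h _ ⟨u, rfl⟩
  · rintro h v ⟨u, rfl⟩
    exact h u

lemma deficiency_eq_orth (T : E →ₗ.[ℂ] E) (hdense : Dense (T.domain : Set E)) (c : ℂ) :
    deficiencySubspace T c = (rng T (starRingEnd ℂ c))ᗮ := by
  ext x
  rw [mem_rng_orth_iff]
  constructor
  · rintro ⟨h, heq⟩ u
    have h1 : ⟪T.adjoint ⟨x, h⟩, (u : E)⟫ = ⟪x, T u⟫ :=
      adjoint_isFormalAdjoint hdense ⟨x, h⟩ u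
    rw [heq, inner_smul_left] at h1
    have h2 : ⟪(T u : E), x⟫ = c * ⟪(u : E), x⟫ := by
      have := congrArg (starRingEnd ℂ) h1
      simpa [inner_conj_symm, map_mul] using this.symm
    rw [inner_sub_left, h2, inner_smul_left]
    ring_nf
    simp [mul_comm]
  · intro h
    have key : ∀ u : T.domain, ⟪c • x, (u : E)⟫ = ⟪x, T u⟫ := by
      intro u
      have h1 := h u
      rw [inner_sub_left, sub_eq_zero, inner_smul_left] at h1
      have := congrArg (starRingEnd ℂ) h1
      simp only [inner_conj_symm, map_mul, RingHom.id_apply, starRingEnd_self_apply] at this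
      rw [inner_smul_left, this]
    have hmem : x ∈ T.adjoint.domain :=
      mem_adjoint_domain_of_exists _ ⟨c • x, key⟩
    exact ⟨hmem, adjoint_apply_eq hdense ⟨x, hmem⟩ key⟩


lemma norm_bound {T : E →ₗ.[ℂ] E} (hsymm : ∀ x y : T.domain, ⟪T x, (y : E)⟫ = ⟪(x : E), T y⟫) (z : ℂ) (u : T.domain) :
    |z.im| * ‖(u : E)‖ ≤ ‖(T u : E) - z • (u : E)‖ := by
  have him : (⟪(T u : E), (u : E)⟫).im = 0 := by
    have h1 : ⟪T u, (u : E)⟫ = ⟪(u : E), T u⟫ := hsymm u u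
    have h2 := inner_conj_symm (𝕜 := ℂ) (T u : E) (u : E)
    rw [← h1] at h2
    exact Complex.conj_eq_iff_im.mp h2
  have hinner : ⟪(u : E), (u : E)⟫ = ((‖(u : E)‖ : ℂ)) ^ 2 :=
    inner_self_eq_norm_sq_to_K (𝕜 := ℂ) (u : E)
  have hv : (⟪(T u : E) - z • (u : E), (u : E)⟫).im = z.im * ‖(u : E)‖ ^ 2 := by
    rw [inner_sub_left, inner_smul_left, hinner]
    simp [him, ← Complex.ofReal_pow]

  have h3 : |z.im| * ‖(u : E)‖ ^ 2 ≤ ‖(T u : E) - z • (u : E)‖ * ‖(u : E)‖ := by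
    calc |z.im| * ‖(u : E)‖ ^ 2 = |(⟪(T u : E) - z • (u : E), (u : E)⟫).im| := by
          rw [hv, abs_mul, _root_.abs_of_nonneg (pow_nonneg (norm_nonneg _) 2)]
      _ ≤ ‖⟪(T u : E) - z • (u : E), (u : E)⟫‖ := Complex.abs_im_le_norm _
      _ ≤ _ := norm_inner_le_norm _ _
  rcases eq_or_lt_of_le (norm_nonneg (u : E)) with h0 | h0
  · simp [← h0]
  · rw [sq, ← mul_assoc] at h3
    exact le_of_mul_le_mul_right h3 h0


lemma eq_zero_of_mem_orth_mem_closure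
    (hsymm : ∀ x y : T.domain, ⟪T x, (y : E)⟫ = ⟪(x : E), T y⟫) {z z' : ℂ}
    (hz : z.im ≠ 0) (hsmall : ‖z - z'‖ < |z.im|) {x : E}
    (hx' : x ∈ (rng T z')ᗮ) (hx : x ∈ (rng T z).topologicalClosure) : x = 0 := by
  set r : ℝ := ‖z - z'‖ / |z.im| with hr
  have him : (0:ℝ) < |z.im| := abs_pos.mpr hz
  have hrlt : r < 1 := (div_lt_one him).mpr hsmall
  have hr0 : 0 ≤ r := div_nonneg (norm_nonneg _) (le_of_lt him)
  -- main estimate: ‖x‖^2 ≤ r * ‖x‖^2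
  have key : ‖x‖ ^ 2 ≤ r * ‖x‖ ^ 2 := by
    apply le_of_forall_pos_le_add
    intro ε hε
    -- choose an approximation y ∈ rng T z with ‖x - y‖ < ε'
    set ε' : ℝ := min (ε / (2 * ‖x‖ + 1)) 1 with hε'def
    have hε'pos : 0 < ε' := lt_min (div_pos hε (by positivity)) one_pos
    have hxcl : x ∈ closure ((rng T z : Set E)) := hx
    obtain ⟨y, hy, hxy⟩ := Metric.mem_closure_iff.mp hxcl ε' hε'pos
    obtain ⟨u, rfl⟩ : ∃ u : T.domain, (T u : E) - z • (u : E) = y := hy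
    set y := (T u : E) - z • (u : E)
    have hxy' : ‖x - y‖ < ε' := by rwa [dist_eq_norm] at hxy
    -- ⟪y, x⟫ bounds
    have hyx : ⟪y, x⟫ = (starRingEnd ℂ) (z' - z) * ⟪(u : E), x⟫ := by
      have h0 : ⟪(T u : E) - z' • (u : E), x⟫ = 0 := (mem_rng_orth_iff T z' x).mp hx' u
      have : y = ((T u : E) - z' • (u : E)) + (z' - z) • (u : E) := by
        simp only [y, sub_smul]; abel
      rw [this, inner_add_left, h0, zero_add, inner_smul_left]
    have hub : ‖(u : E)‖ ≤ (‖x‖ + ε') / |z.im| := by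
      rw [le_div_iff₀ him]
      have h1 := norm_bound hsymm z u
      have h2 : ‖y‖ ≤ ‖x‖ + ε' := by
        have h3 := abs_norm_sub_norm_le y x
        rw [norm_sub_rev x y] at hxy'
        have := abs_le.mp h3
        linarith [this.1, le_of_lt hxy']
      nlinarith
    have hyxb : ‖⟪y, x⟫‖ ≤ ‖z - z'‖ * ((‖x‖ + ε') / |z.im|) * ‖x‖ := by
      rw [hyx]
      calc ‖(starRingEnd ℂ) (z' - z) * ⟪(u : E), x⟫‖
          = ‖z' - z‖ * ‖⟪(u : E), x⟫‖ := by
            rw [norm_mul, RCLike.norm_conj]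
        _ ≤ ‖z - z'‖ * (‖(u:E)‖ * ‖x‖) := by
            rw [norm_sub_rev z' z]
            exact mul_le_mul_of_nonneg_left (norm_inner_le_norm _ _) (norm_nonneg _)
        _ ≤ ‖z - z'‖ * (((‖x‖ + ε') / |z.im|) * ‖x‖) := by
            apply mul_le_mul_of_nonneg_left _ (norm_nonneg _)
            exact mul_le_mul_of_nonneg_right hub (norm_nonneg _)
        _ = _ := by ring
    -- ‖x‖^2 = re ⟪x - y, x⟫ + re ⟪y, x⟫
    have hsq : ‖x‖ ^ 2 = (⟪x - y, x⟫).re + (⟪y, x⟫).re := by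
      have : ⟪x - y, x⟫ + ⟪y, x⟫ = ⟪x, x⟫ := by rw [← inner_add_left, sub_add_cancel]
      have h2 := congrArg Complex.re this
      rw [Complex.add_re] at h2
      have h3 : (⟪x, x⟫ : ℂ).re = ‖x‖ ^ 2 := by
        rw [inner_self_eq_norm_sq_to_K (𝕜 := ℂ) x]
        simp [← Complex.ofReal_pow]
      rw [← h3]; exact h2.symm
    have hfinal : ‖x‖ ^ 2 ≤ ε' * ‖x‖ + r * ((‖x‖ + ε') * ‖x‖) := by
      rw [hsq]
      have hb1 : (⟪x - y, x⟫).re ≤ ε' * ‖x‖ := by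
        calc (⟪x - y, x⟫).re ≤ |(⟪x - y, x⟫).re| := le_abs_self _
          _ ≤ ‖⟪x - y, x⟫‖ := Complex.abs_re_le_norm _
          _ ≤ ‖x - y‖ * ‖x‖ := norm_inner_le_norm _ _
          _ ≤ ε' * ‖x‖ := mul_le_mul_of_nonneg_right (le_of_lt hxy') (norm_nonneg _)
      have hb2 : (⟪y, x⟫).re ≤ r * ((‖x‖ + ε') * ‖x‖) := by
        calc (⟪y, x⟫).re ≤ |(⟪y, x⟫).re| := le_abs_self _
          _ ≤ ‖⟪y, x⟫‖ := Complex.abs_re_le_norm _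
          _ ≤ ‖z - z'‖ * ((‖x‖ + ε') / |z.im|) * ‖x‖ := hyxb
          _ = r * ((‖x‖ + ε') * ‖x‖) := by rw [hr]; field_simp
      linarith
    have hε'1 : ε' ≤ 1 := min_le_right _ _
    have hε'2 : ε' ≤ ε / (2 * ‖x‖ + 1) := min_le_left _ _
    have hextra : ε' * ‖x‖ + r * (ε' * ‖x‖) ≤ ε := by
      have h1 : ε' * ‖x‖ + r * (ε' * ‖x‖) ≤ 2 * (ε' * ‖x‖) := by nlinarith [norm_nonneg x, mul_nonneg (le_of_lt hε'pos) (norm_nonneg x)]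
      have h2 : ε' * (2 * ‖x‖ + 1) ≤ ε := by
        rw [← le_div_iff₀ (by positivity)]
        exact hε'2
      nlinarith [norm_nonneg x, le_of_lt hε'pos]
    calc ‖x‖ ^ 2 ≤ ε' * ‖x‖ + r * ((‖x‖ + ε') * ‖x‖) := hfinal
      _ = r * ‖x‖ ^ 2 + (ε' * ‖x‖ + r * (ε' * ‖x‖)) := by ring
      _ ≤ r * ‖x‖ ^ 2 + ε := by linarith
  have : (1 - r) * ‖x‖ ^ 2 ≤ 0 := by linarith
  have hx0 : ‖x‖ ^ 2 ≤ 0 := by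
    by_contra h
    push_neg at h
    nlinarith
  have : ‖x‖ = 0 := by nlinarith [norm_nonneg x, sq_nonneg ‖x‖]
  exact norm_eq_zero.mp this


-- classification --
section Classif
variable {X : Type*} [NormedAddCommGroup X] [InnerProductSpace ℂ X] [CompleteSpace X]
variable {Y : Type*} [NormedAddCommGroup Y] [InnerProductSpace ℂ Y] [CompleteSpace Y]

lemma countable_of_orthonormal [SeparableSpace X] {w : Set X}
    (h : Orthonormal ℂ ((↑) : w → X)) : w.Countable := by
  apply Set.PairwiseDisjoint.countable_of_isOpen
    (s := fun x : X => Metric.ball x (1/2)) (a := w)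
  · intro x hx y hy hxy
    apply Metric.ball_disjoint_ball
    rw [dist_eq_norm]
    have hn : ‖x - y‖ ^ 2 = 2 := by
      have hx1 : ‖x‖ = 1 := by
        simpa using h.1 ⟨x, hx⟩
      have hy1 : ‖y‖ = 1 := by
        simpa using h.1 ⟨y, hy⟩
      have hxy0 : ⟪x, y⟫ = 0 := by
        have := h.2 (i := ⟨x, hx⟩) (j := ⟨y, hy⟩) (by simp [Subtype.ext_iff, hxy])
        simpa using this
      have hyx0 : ⟪y, x⟫ = 0 := by rw [← inner_conj_symm, hxy0, _root_.map_zero]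
      have expand := norm_sub_sq (𝕜 := ℂ) x y
      rw [hx1, hy1, hxy0] at expand
      simp at expand; linarith
    nlinarith [norm_nonneg (x - y)]
  · intro x _; exact Metric.isOpen_ball
  · intro x _; exact ⟨x, by simp⟩

lemma exists_hilbertBasis_nat [SeparableSpace X] (h : ¬ FiniteDimensional ℂ X) :
    Nonempty (HilbertBasis ℕ ℂ X) := by
  obtain ⟨w, b, hb⟩ := exists_hilbertBasis ℂ X
  have horth : Orthonormal ℂ ((↑) : w → X) := by
    have := b.orthonormal
    rwa [show ⇑b = ((↑) : w → X) from hb] at this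
  have hcount : w.Countable := countable_of_orthonormal horth
  have hinf : w.Infinite := by
    by_contra hfin
    rw [Set.not_infinite] at hfin
    apply h
    have hspan : (Submodule.span ℂ w).topologicalClosure = ⊤ := by
      have := b.dense_span
      rw [hb, Subtype.range_coe] at this
      exact this
    haveI : FiniteDimensional ℂ (Submodule.span ℂ w) := FiniteDimensional.span_of_finite ℂ hfin
    have hclosed : IsClosed ((Submodule.span ℂ w : Submodule ℂ X) : Set X) :=
      Submodule.closed_of_finiteDimensional _
    rw [hclosed.submodule_topologicalClosure_eq] at hspan
    have : FiniteDimensional ℂ (⊤ : Submodule ℂ X) := hspan ▸ inferInstance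
    exact Module.Finite.equiv (Submodule.topEquiv (R := ℂ) (M := X))
  haveI : Countable ↥w := hcount.to_subtype
  haveI : Infinite ↥w := hinf.to_subtype
  obtain ⟨d⟩ : Nonempty (Denumerable ↥w) := nonempty_denumerable_iff.mpr ⟨‹_›, ‹_›⟩
  let e : ↥w ≃ ℕ := @Denumerable.eqv ↥w d
  set v : ℕ → X := fun n => ((e.symm n : ↥w) : X) with hv
  have hvo : Orthonormal ℂ v := horth.comp e.symm e.symm.injective
  have hrange : Set.range v = w := by
    have h1 : v = ((↑) : w → X) ∘ e.symm := rfl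
    rw [h1, Set.range_comp, Equiv.range_eq_univ, Set.image_univ, Subtype.range_coe]
  have hspan : ⊤ ≤ (Submodule.span ℂ (Set.range v)).topologicalClosure := by
    rw [hrange]
    have := b.dense_span
    rw [hb, Subtype.range_coe] at this
    rw [this]
  exact ⟨HilbertBasis.mk hvo hspan⟩

lemma iso_of_inj [SeparableSpace X] [SeparableSpace Y]
    (f : X →ₗ[ℂ] Y) (hf : Function.Injective f) (g : Y →ₗ[ℂ] X) (hg : Function.Injective g) :
    Nonempty (X ≃ₗᵢ[ℂ] Y) := by
  by_cases hX : FiniteDimensional ℂ X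
  · haveI := hX
    haveI : FiniteDimensional ℂ Y := FiniteDimensional.of_injective g hg
    have heq : Module.finrank ℂ X = Module.finrank ℂ Y :=
      le_antisymm (LinearMap.finrank_le_finrank_of_injective hf)
        (LinearMap.finrank_le_finrank_of_injective hg)
    exact ⟨((stdOrthonormalBasis ℂ X).repr.trans
      (LinearIsometryEquiv.piLpCongrLeft 2 ℂ ℂ (finCongr heq))).trans
      (stdOrthonormalBasis ℂ Y).repr.symm⟩
  · have hY : ¬ FiniteDimensional ℂ Y := fun hY => hX (FiniteDimensional.of_injective f hf)
    obtain ⟨bX⟩ := exists_hilbertBasis_nat hX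
    obtain ⟨bY⟩ := exists_hilbertBasis_nat hY
    exact ⟨bX.repr.trans bY.repr.symm⟩

end Classif

section Chain
variable {T : E →ₗ.[ℂ] E}

lemma exists_inj (hsymm : ∀ x y : T.domain, ⟪T x, (y : E)⟫ = ⟪(x : E), T y⟫) {z z' : ℂ}
    (hz : z.im ≠ 0) (hsmall : ‖z - z'‖ < |z.im|) :
    ∃ f : ↥(rng T z')ᗮ →ₗ[ℂ] ↥(rng T z)ᗮ, Function.Injective f := by
  refine ⟨((rng T z)ᗮ.orthogonalProjectionOnto).toLinearMap.comp ((rng T z')ᗮ.subtype), ?_⟩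
  rw [← LinearMap.ker_eq_bot, LinearMap.ker_eq_bot']
  intro x hx0
  have h1 : (rng T z)ᗮ.orthogonalProjectionOnto (x : E) = 0 := hx0
  rw [Submodule.orthogonalProjectionOnto_eq_zero_iff] at h1
  rw [Submodule.orthogonal_orthogonal_eq_closure] at h1
  exact Subtype.ext (eq_zero_of_mem_orth_mem_closure hsymm hz hsmall x.2 h1)

lemma step [SeparableSpace E] (hsymm : ∀ x y : T.domain, ⟪T x, (y : E)⟫ = ⟪(x : E), T y⟫)
    {z z' : ℂ} (hz : z.im ≠ 0) (hz' : z'.im ≠ 0)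
    (h1 : ‖z - z'‖ < |z.im|) (h2 : ‖z' - z‖ < |z'.im|) :
    Nonempty (↥(rng T z')ᗮ ≃ₗᵢ[ℂ] ↥(rng T z)ᗮ) := by
  haveI : SecondCountableTopology E := UniformSpace.secondCountable_of_separable E
  haveI : SeparableSpace ↥(rng T z')ᗮ := by
    haveI : SecondCountableTopology ↥(rng T z')ᗮ := inferInstance
    exact SecondCountableTopology.to_separableSpace
  haveI : SeparableSpace ↥(rng T z)ᗮ := by
    haveI : SecondCountableTopology ↥(rng T z)ᗮ := inferInstance
    exact SecondCountableTopology.to_separableSpace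
  obtain ⟨f, hf⟩ := exists_inj hsymm hz h1
  obtain ⟨g, hg⟩ := exists_inj hsymm hz' h2
  exact iso_of_inj f hf g hg

lemma chain [SeparableSpace E] (hsymm : ∀ x y : T.domain, ⟪T x, (y : E)⟫ = ⟪(x : E), T y⟫)
    (z₀ : ℂ) (him : |z₀.im| = 1) (s : ℝ) :
    Nonempty (↥(rng T (z₀ + s))ᗮ ≃ₗᵢ[ℂ] ↥(rng T z₀)ᗮ) := by
  suffices H : ∀ n : ℕ, ∀ s : ℝ, |s| ≤ n / 2 →
      Nonempty (↥(rng T (z₀ + s))ᗮ ≃ₗᵢ[ℂ] ↥(rng T z₀)ᗮ) by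
    refine H ⌈2 * |s|⌉₊ s ?_
    rw [le_div_iff₀ (by norm_num : (0:ℝ) < 2)]
    calc |s| * 2 = 2 * |s| := mul_comm _ _
      _ ≤ ⌈2 * |s|⌉₊ := Nat.le_ceil _
  intro n
  induction n with
  | zero =>
    intro s hs
    have h0 : s = 0 := by
      have := abs_nonneg s
      have : |s| = 0 := le_antisymm (by simpa using hs) (abs_nonneg s)
      exact abs_eq_zero.mp this
    subst h0
    rw [show z₀ + ((0:ℝ):ℂ) = z₀ by simp]
    exact ⟨LinearIsometryEquiv.refl ℂ _⟩
  | succ n ih =>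
    intro s hs
    set s' : ℝ := s * n / (n + 1) with hs'def
    have hn1 : (0:ℝ) < n + 1 := by positivity
    have habs' : |s'| = |s| * n / (n + 1) := by
      rw [hs'def, abs_div, abs_mul]
      simp [abs_of_pos hn1, Nat.abs_cast]
    have h1 : |s'| ≤ n / 2 := by
      rw [habs']
      rw [div_le_iff₀ hn1] at *
      have : |s| ≤ (n + 1) / 2 := by
        have := hs; push_cast at this ⊢; linarith
      nlinarith [abs_nonneg s, Nat.cast_nonneg (α := ℝ) n]
    have h2 : |s - s'| ≤ 1 / 2 := by
      have hdiff : s - s' = s / (n + 1) := by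
        rw [hs'def]; field_simp; ring
      rw [hdiff, abs_div, abs_of_pos hn1, div_le_iff₀ hn1]
      have : |s| ≤ (n + 1) / 2 := by push_cast at hs ⊢; linarith
      linarith
    obtain ⟨e1⟩ := ih s' h1
    have him1 : (z₀ + (s':ℂ)).im ≠ 0 := by
      simp only [Complex.add_im, Complex.ofReal_im, add_zero]
      intro h; rw [h] at him; simp at him
    have him2 : (z₀ + (s:ℂ)).im ≠ 0 := by
      simp only [Complex.add_im, Complex.ofReal_im, add_zero]
      intro h; rw [h] at him; simp at him
    have habs : ‖(z₀ + (s':ℂ)) - (z₀ + (s:ℂ))‖ = |s' - s| := by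
      rw [show (z₀ + (s':ℂ)) - (z₀ + (s:ℂ)) = ((s' - s : ℝ) : ℂ) by push_cast; ring]
      exact (Complex.norm_real _).trans (Real.norm_eq_abs _)
    have hlt1 : ‖(z₀ + (s':ℂ)) - (z₀ + (s:ℂ))‖ < |(z₀ + (s':ℂ)).im| := by
      rw [habs, Complex.add_im, Complex.ofReal_im, add_zero, him, abs_sub_comm]
      linarith
    have hlt2 : ‖(z₀ + (s:ℂ)) - (z₀ + (s':ℂ))‖ < |(z₀ + (s:ℂ)).im| := by
      rw [show (z₀ + (s:ℂ)) - (z₀ + (s':ℂ)) = ((s - s' : ℝ) : ℂ) by push_cast; ring,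
        Complex.norm_real, Real.norm_eq_abs, Complex.add_im, Complex.ofReal_im, add_zero, him]
      linarith
    obtain ⟨e2⟩ := step hsymm him1 him2 hlt1 hlt2
    exact ⟨e2.trans e1⟩

end Chain

section piCongr

/-- congruence of `PiLp 2` along componentwise linear isometry equivs -/
noncomputable def piLpCongrRight {ι : Type*} [Fintype ι] {F G : ι → Type*}
    [∀ i, NormedAddCommGroup (F i)] [∀ i, InnerProductSpace ℂ (F i)]
    [∀ i, NormedAddCommGroup (G i)] [∀ i, InnerProductSpace ℂ (G i)]
    (e : ∀ i, F i ≃ₗᵢ[ℂ] G i) : (PiLp 2 F) ≃ₗᵢ[ℂ] (PiLp 2 G) := by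
  refine LinearEquiv.isometryOfInner
    (((WithLp.linearEquiv 2 ℂ (∀ i, F i)).trans
      (LinearEquiv.piCongrRight fun i => (e i).toLinearEquiv)).trans
      (WithLp.linearEquiv 2 ℂ (∀ i, G i)).symm) ?_
  intro x y
  rw [PiLp.inner_apply, PiLp.inner_apply]
  apply Finset.sum_congr rfl
  intro i _
  exact (e i).inner_map_map (x i) (y i)

end piCongr


section PiPart
variable {HA : Type*} [NormedAddCommGroup HA] [InnerProductSpace ℂ HA] [CompleteSpace HA]

local instance piLp_completeSpace' {n : ℕ} : CompleteSpace (PiLp 2 fun _ : Fin n => HA) := inferInstance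

lemma dense_pi_domain (n : ℕ) (TA : HA →ₗ.[ℂ] HA) (hdense : Dense (TA.domain : Set HA))
    (TAB : (PiLp 2 fun _ : Fin n => HA) →ₗ.[ℂ] (PiLp 2 fun _ : Fin n => HA))
    (hdom : ∀ Φ : PiLp 2 fun _ : Fin n => HA, Φ ∈ TAB.domain ↔ ∀ k, Φ k ∈ TA.domain) :
    Dense (TAB.domain : Set (PiLp 2 fun _ : Fin n => HA)) := by
  rw [Metric.dense_iff]
  intro Φ r hr
  have hδ : (0:ℝ) < r / (n + 1) := by positivity
  have hcomp : ∀ k : Fin n, ∃ x ∈ TA.domain, dist (Φ k) x < r / (n + 1) := by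
    intro k
    have := hdense.exists_dist_lt (Φ k) hδ
    obtain ⟨x, hx1, hx2⟩ := this
    exact ⟨x, hx1, hx2⟩
  choose x hx hdx using hcomp
  refine ⟨WithLp.toLp 2 (x : ∀ _, HA), Metric.mem_ball.mpr ?_, (hdom _).mpr hx⟩
  rw [dist_comm, PiLp.dist_eq_of_L2, Real.sqrt_lt' hr]
  have hbound : ∀ k : Fin n, dist (Φ k) (x k) ^ 2 ≤ (r / (n+1)) ^ 2 := by
    intro k
    have h1 := le_of_lt (hdx k)
    nlinarith [dist_nonneg (x := Φ k) (y := x k), hδ]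
  calc ∑ k, dist (Φ k) (x k) ^ 2 ≤ ∑ _k : Fin n, (r / (n+1)) ^ 2 :=
        Finset.sum_le_sum fun k _ => hbound k
    _ = n * (r / (n+1)) ^ 2 := by rw [Finset.sum_const]; simp [mul_comm]
    _ < r ^ 2 := by
        rw [div_pow]
        have hn2 : (0:ℝ) < ((n:ℝ)+1)^2 := by positivity
        have hc : r^2/((n:ℝ)+1)^2 * ((n:ℝ)+1)^2 = r^2 := div_mul_cancel₀ _ (ne_of_gt hn2)
        have ha : (0:ℝ) < r^2/((n:ℝ)+1)^2 := by positivity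
        nlinarith [Nat.cast_nonneg (α := ℝ) n]

lemma orth_pi_iff (n : ℕ) (lam : Fin n → ℝ) (TA : HA →ₗ.[ℂ] HA)
    (TAB : (PiLp 2 fun _ : Fin n => HA) →ₗ.[ℂ] (PiLp 2 fun _ : Fin n => HA))
    (hdom : ∀ Φ : PiLp 2 fun _ : Fin n => HA, Φ ∈ TAB.domain ↔ ∀ k, Φ k ∈ TA.domain)
    (hact : ∀ (Φ : TAB.domain) (k : Fin n),
      (TAB Φ : PiLp 2 fun _ : Fin n => HA) k =
        TA ⟨(Φ : PiLp 2 fun _ : Fin n => HA) k, (hdom _).mp Φ.2 k⟩ +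
          ((lam k : ℝ) : ℂ) • (Φ : PiLp 2 fun _ : Fin n => HA) k)
    (z : ℂ) (Ψ : PiLp 2 fun _ : Fin n => HA) :
    Ψ ∈ (rng TAB z)ᗮ ↔ ∀ k, Ψ k ∈ (rng TA (z - lam k))ᗮ := by
  rw [mem_rng_orth_iff]
  constructor
  · intro H k
    rw [mem_rng_orth_iff]
    intro u
    classical
    set Φ : PiLp 2 fun _ : Fin n => HA := WithLp.toLp 2 (Pi.single k (u : HA) : ∀ _ : Fin n, HA) with hΦ
    have hmem : Φ ∈ TAB.domain := by
      rw [hdom]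
      intro j
      rcases eq_or_ne j k with rfl | hjk
      · simpa [hΦ, Pi.single_eq_same] using u.2
      · simp [hΦ, Pi.single_eq_of_ne hjk, Submodule.zero_mem, hjk]
    have := H ⟨Φ, hmem⟩
    rw [PiLp.inner_apply] at this
    rw [Finset.sum_eq_single k] at this
    · -- main term
      have hk : (⟨Φ k, (hdom Φ).mp hmem k⟩ : TA.domain) = u := by
        apply Subtype.ext
        simp [hΦ, Pi.single_eq_same]
      rw [PiLp.sub_apply, PiLp.smul_apply] at this
      rw [hact ⟨Φ, hmem⟩ k] at this
      simp only [hk] at this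
      have harr : (TA u : HA) + ((lam k : ℝ) : ℂ) • (Φ k) - z • (Φ k)
          = (TA u : HA) - (z - lam k) • (u : HA) := by
        have : Φ k = (u : HA) := by simp [hΦ, Pi.single_eq_same]
        rw [this, sub_smul]
        abel
      rw [harr] at this
      exact this
    · intro j _ hjk
      have h0 : Φ j = 0 := by simp [hΦ, Pi.single_eq_of_ne hjk, hjk]
      have hsub : (⟨Φ j, (hdom Φ).mp hmem j⟩ : TA.domain) = 0 := Subtype.ext h0
      rw [PiLp.sub_apply, PiLp.smul_apply, hact ⟨Φ, hmem⟩ j, hsub]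
      simp [h0]
    · intro h; exact absurd (Finset.mem_univ k) h
  · intro H u
    rw [PiLp.inner_apply]
    apply Finset.sum_eq_zero
    intro j _
    have hj := (mem_rng_orth_iff TA (z - lam j) (Ψ j)).mp (H j)
      ⟨(u : PiLp 2 fun _ : Fin n => HA) j, (hdom _).mp u.2 j⟩
    rw [PiLp.sub_apply, PiLp.smul_apply, hact u j]
    have harr : (TA ⟨(u : PiLp 2 fun _ : Fin n => HA) j, (hdom _).mp u.2 j⟩ : HA)
        + ((lam j : ℝ) : ℂ) • (u : PiLp 2 fun _ : Fin n => HA) j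
        - z • (u : PiLp 2 fun _ : Fin n => HA) j
        = (TA ⟨(u : PiLp 2 fun _ : Fin n => HA) j, (hdom _).mp u.2 j⟩ : HA)
          - (z - lam j) • ((u : PiLp 2 fun _ : Fin n => HA) j) := by
      rw [sub_smul]; abel
    rw [harr]
    exact hj

noncomputable def piSplit {n : ℕ} (S : Submodule ℂ (PiLp 2 fun _ : Fin n => HA))
    (s : Fin n → Submodule ℂ HA)
    (h : ∀ Ψ : PiLp 2 fun _ : Fin n => HA, Ψ ∈ S ↔ ∀ k, Ψ k ∈ s k) :
    ↥S ≃ₗᵢ[ℂ] PiLp 2 (fun k => ↥(s k)) := by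
  refine LinearEquiv.isometryOfInner
    { toFun := fun Ψ => WithLp.toLp 2 fun k => ⟨(Ψ : PiLp 2 fun _ : Fin n => HA) k, (h _).mp Ψ.2 k⟩
      invFun := fun F => ⟨WithLp.toLp 2 (fun k => (F k : HA) : ∀ _ : Fin n, HA), (h _).mpr fun k => (F k).2⟩
      map_add' := by intro Ψ Ψ'; rfl
      map_smul' := by intro ca Ψ; rfl
      left_inv := by intro Ψ; exact Subtype.ext rfl
      right_inv := by intro F; rfl } ?_
  intro x y
  rw [PiLp.inner_apply]
  rw [Submodule.coe_inner, PiLp.inner_apply]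
  apply Finset.sum_congr rfl
  intro k _
  rfl

end PiPart

end DefProofAux


-- main component lemma
open DefProofAux Complex in
lemma defMain {HA : Type*} [NormedAddCommGroup HA] [InnerProductSpace ℂ HA] [CompleteSpace HA]
    [TopologicalSpace.SeparableSpace HA]
    (TA : HA →ₗ.[ℂ] HA) (hdense : Dense (TA.domain : Set HA))
    (hsymm : ∀ x y : TA.domain, ⟪TA x, (y : HA)⟫ = ⟪(x : HA), TA y⟫)
    (n : ℕ) (lam : Fin n → ℝ)
    (TAB : (PiLp 2 fun _ : Fin n => HA) →ₗ.[ℂ] (PiLp 2 fun _ : Fin n => HA))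
    (hdom : ∀ Φ : PiLp 2 fun _ : Fin n => HA, Φ ∈ TAB.domain ↔ ∀ k, Φ k ∈ TA.domain)
    (hact : ∀ (Φ : TAB.domain) (k : Fin n),
      (TAB Φ : PiLp 2 fun _ : Fin n => HA) k =
        TA ⟨(Φ : PiLp 2 fun _ : Fin n => HA) k, (hdom _).mp Φ.2 k⟩ +
          (lam k : ℂ) • (Φ : PiLp 2 fun _ : Fin n => HA) k)
    (c : ℂ) (him : |(starRingEnd ℂ c).im| = 1) :
    Nonempty (↥(deficiencySubspace TAB c) ≃ₗᵢ[ℂ]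
        PiLp 2 fun _ : Fin n => ↥(deficiencySubspace TA c)) := by
  have hdenseAB := dense_pi_domain n TA hdense TAB hdom
  have memdef : ∀ Ψ : PiLp 2 fun _ : Fin n => HA,
      Ψ ∈ deficiencySubspace TAB c ↔ ∀ k, Ψ k ∈ deficiencySubspace TA (c - lam k) := by
    intro Ψ
    rw [deficiency_eq_orth TAB hdenseAB c,
      orth_pi_iff n lam TA TAB hdom hact (starRingEnd ℂ c) Ψ]
    apply forall_congr'
    intro k
    rw [deficiency_eq_orth TA hdense (c - lam k)]
    have hc : starRingEnd ℂ (c - (lam k : ℂ)) = starRingEnd ℂ c - (lam k : ℂ) := by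
      rw [map_sub, Complex.conj_ofReal]
    rw [hc]
  have hcomp : ∀ k : Fin n,
      Nonempty (↥(deficiencySubspace TA (c - lam k)) ≃ₗᵢ[ℂ] ↥(deficiencySubspace TA c)) := by
    intro k
    have he1 : deficiencySubspace TA (c - lam k)
        = (rng TA ((starRingEnd ℂ c) + ((- lam k : ℝ) : ℂ)))ᗮ := by
      rw [deficiency_eq_orth TA hdense]
      congr 1
      rw [map_sub, Complex.conj_ofReal]
      push_cast
      ring
    have he2 : deficiencySubspace TA c = (rng TA (starRingEnd ℂ c))ᗮ :=
      deficiency_eq_orth TA hdense c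
    obtain ⟨e⟩ := chain hsymm (starRingEnd ℂ c) him (- lam k)
    exact ⟨((LinearIsometryEquiv.ofEq _ _ he1).trans e).trans
      (LinearIsometryEquiv.ofEq _ _ he2).symm⟩
  exact ⟨(piSplit (deficiencySubspace TAB c) (fun k => deficiencySubspace TA (c - lam k))
    memdef).trans (piLpCongrRight (fun k => Classical.choice (hcomp k)))⟩

/-- Let `H_A` be a densely defined symmetric operator on a complex separable Hilbert space and
`H_B` a self-adjoint operator on a finite-dimensional Hilbert space with orthonormal eigenbasis
`{ρ_k}` and (real) eigenvalues `λ_k`.  Realizing `𝓗_A ⊗ 𝓗_B` as `⊕ₖ 𝓗_A` via the eigenbasis, the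
operator `H_AB = H_A ⊗ 𝕀 + 𝕀 ⊗ H_B` acts componentwise by `(H_AB Φ)_k = H_A Φ_k + λ_k Φ_k`.
Then the deficiency spaces satisfy `N_{AB±} ≃ N_{A±} ⊗ 𝓗_B` as Hilbert spaces, i.e. they are
isometrically isomorphic to the direct sum of `dim 𝓗_B` copies of `N_{A±}`. -/
theorem stmt_2 {HA : Type*} [NormedAddCommGroup HA] [InnerProductSpace ℂ HA] [CompleteSpace HA]
    [TopologicalSpace.SeparableSpace HA]
    (TA : HA →ₗ.[ℂ] HA) (hdense : Dense (TA.domain : Set HA))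
    (hsymm : ∀ x y : TA.domain, ⟪TA x, (y : HA)⟫ = ⟪(x : HA), TA y⟫)
    (n : ℕ) (lam : Fin n → ℝ)
    (TAB : (PiLp 2 fun _ : Fin n => HA) →ₗ.[ℂ] (PiLp 2 fun _ : Fin n => HA))
    (hdom : ∀ Φ : PiLp 2 fun _ : Fin n => HA, Φ ∈ TAB.domain ↔ ∀ k, Φ k ∈ TA.domain)
    (hact : ∀ (Φ : TAB.domain) (k : Fin n),
      (TAB Φ : PiLp 2 fun _ : Fin n => HA) k =
        TA ⟨(Φ : PiLp 2 fun _ : Fin n => HA) k, (hdom _).mp Φ.2 k⟩ +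
          (lam k : ℂ) • (Φ : PiLp 2 fun _ : Fin n => HA) k) :
    Nonempty (↥(deficiencySubspace TAB Complex.I) ≃ₗᵢ[ℂ]
        PiLp 2 fun _ : Fin n => ↥(deficiencySubspace TA Complex.I)) ∧
    Nonempty (↥(deficiencySubspace TAB (-Complex.I)) ≃ₗᵢ[ℂ]
        PiLp 2 fun _ : Fin n => ↥(deficiencySubspace TA (-Complex.I))) := by
  constructor
  · exact defMain TA hdense hsymm n lam TAB hdom hact Complex.I (by simp)
  · exact defMain TA hdense hsymm n lam TAB hdom hact (-Complex.I) (by simp)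
end

section
/- Let $Q$ be a quadratic form on a dense domain $\mathcal{D} \subset \mathcal{H}$ that is partially orthogonally additive with respect to an orthogonal decomposition $\mathcal{H} = W_+ \oplus W_-$, with sector $Q_+(\Phi) = Q(P_+\Phi)$ semibounded from below and closable, and sector $Q_-(\Phi) = Q(P_-\Phi)$ semibounded from above and closable. Then there exists a unique self-adjoint operator $T$ with domain $\mathcal{D}(T) \subset \overline{\mathcal{D}}$ such that $Q(\Phi,\Psi) = \langle \Phi, T\Psi \rangle$ for all $\Phi$ in the closure of the form domain and all $\Psi \in \mathcal{D}(T)$. -/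
open ComplexInnerProductSpace Filter

variable {H : Type*} [NormedAddCommGroup H] [InnerProductSpace ℂ H] [CompleteSpace H]

/-- The diagonal of the sector of the quadratic form `q` cut out by the projection `P`. -/
def sectorDiag (D : Submodule ℂ H) (q : ↥D → ↥D → ℂ) (P : H →L[ℂ] H)
    (hPD : ∀ x ∈ D, P x ∈ D) (Φ : ↥D) : ℂ :=
  q ⟨P (Φ : H), hPD _ Φ.2⟩ ⟨P (Φ : H), hPD _ Φ.2⟩

/-- The (squared) graph norm associated to a partially orthogonally additive quadratic form
whose `+` sector is bounded below by `-a` and whose `-` sector is bounded above by `b`. -/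
noncomputable def graphNormSq (D : Submodule ℂ H) (q : ↥D → ↥D → ℂ) (Pp Pm : H →L[ℂ] H)
    (hPpD : ∀ x ∈ D, Pp x ∈ D) (hPmD : ∀ x ∈ D, Pm x ∈ D) (a b : ℝ) (Φ : ↥D) : ℝ :=
  (1 + a) * ‖Pp (Φ : H)‖ ^ 2 + (sectorDiag D q Pp hPpD Φ).re +
    ((1 + b) * ‖Pm (Φ : H)‖ ^ 2 - (sectorDiag D q Pm hPmD Φ).re)

/-- Cauchy sequences for the graph norm of the form. -/
def IsGraphCauchy (D : Submodule ℂ H) (q : ↥D → ↥D → ℂ) (Pp Pm : H →L[ℂ] H)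
    (hPpD : ∀ x ∈ D, Pp x ∈ D) (hPmD : ∀ x ∈ D, Pm x ∈ D) (a b : ℝ)
    (Φ : ℕ → ↥D) : Prop :=
  ∀ ε > 0, ∃ N : ℕ, ∀ m ≥ N, ∀ n ≥ N,
    graphNormSq D q Pp Pm hPpD hPmD a b (Φ m - Φ n) < ε

set_option synthInstance.maxHeartbeats 1000000
set_option maxHeartbeats 1600000
set_option linter.unusedVariables false

/-- Bundled data and hypotheses for the representation theorem. -/
structure POASetup (H : Type*) [NormedAddCommGroup H] [InnerProductSpace ℂ H]
    [CompleteSpace H] where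
  D : Submodule ℂ H
  q : ↥D → ↥D → ℂ
  Pp : H →L[ℂ] H
  Pm : H →L[ℂ] H
  a : ℝ
  b : ℝ
  hD : Dense (D : Set H)
  hherm : ∀ x y : ↥D, q x y = (starRingEnd ℂ) (q y x)
  haddl : ∀ x y z : ↥D, q (x + y) z = q x z + q y z
  haddr : ∀ x y z : ↥D, q x (y + z) = q x y + q x z
  hsmulr : ∀ (c : ℂ) (x y : ↥D), q x (c • y) = c * q x y
  hsum : Pp + Pm = 1
  hPp2 : Pp * Pp = Pp
  hPm2 : Pm * Pm = Pm
  hPpsa : IsSelfAdjoint Pp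
  hPmsa : IsSelfAdjoint Pm
  hPpPm : Pp * Pm = 0
  hPpD : ∀ x ∈ D, Pp x ∈ D
  hPmD : ∀ x ∈ D, Pm x ∈ D
  hPOA : ∀ Φ Ψ : ↥D, ⟪Pp (Φ : H), Pp (Ψ : H)⟫ = (0 : ℂ) →
      ⟪Pm (Φ : H), Pm (Ψ : H)⟫ = (0 : ℂ) →
      q (Φ + Ψ) (Φ + Ψ) = q Φ Φ + q Ψ Ψ
  hlow : ∀ Φ : ↥D, -a * ‖Pp (Φ : H)‖ ^ 2 ≤ (sectorDiag D q Pp hPpD Φ).re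
  hup : ∀ Φ : ↥D, (sectorDiag D q Pm hPmD Φ).re ≤ b * ‖Pm (Φ : H)‖ ^ 2
  hclosp : ∀ Φ : ℕ → ↥D,
      (∀ ε > 0, ∃ N : ℕ, ∀ m ≥ N, ∀ n ≥ N,
        (1 + a) * ‖Pp ((Φ m : H) - (Φ n : H))‖ ^ 2 +
          (sectorDiag D q Pp hPpD (Φ m - Φ n)).re < ε) →
      Tendsto (fun n => Pp (Φ n : H)) atTop (nhds 0) →
      Tendsto (fun n => (sectorDiag D q Pp hPpD (Φ n)).re) atTop (nhds 0)
  hclosm : ∀ Φ : ℕ → ↥D,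
      (∀ ε > 0, ∃ N : ℕ, ∀ m ≥ N, ∀ n ≥ N,
        (1 + b) * ‖Pm ((Φ m : H) - (Φ n : H))‖ ^ 2 -
          (sectorDiag D q Pm hPmD (Φ m - Φ n)).re < ε) →
      Tendsto (fun n => Pm (Φ n : H)) atTop (nhds 0) →
      Tendsto (fun n => (sectorDiag D q Pm hPmD (Φ n)).re) atTop (nhds 0)

namespace POASetup

variable (S : POASetup H)

/-- `Pp` as a linear map on the domain. -/
def PpD : ↥S.D →ₗ[ℂ] ↥S.D where
  toFun x := ⟨S.Pp (x : H), S.hPpD _ x.2⟩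
  map_add' x y := by ext; simp
  map_smul' c x := by ext; simp

def PmD : ↥S.D →ₗ[ℂ] ↥S.D where
  toFun x := ⟨S.Pm (x : H), S.hPmD _ x.2⟩
  map_add' x y := by ext; simp
  map_smul' c x := by ext; simp

@[simp] lemma coe_PpD (x : ↥S.D) : (S.PpD x : H) = S.Pp (x : H) := rfl
@[simp] lemma coe_PmD (x : ↥S.D) : (S.PmD x : H) = S.Pm (x : H) := rfl

/-- basic algebraic properties of `q` -/
lemma q_zero_right (x : ↥S.D) : S.q x 0 = 0 := by
  have := S.hsmulr 0 x 0; simpa using this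

lemma q_zero_left (x : ↥S.D) : S.q 0 x = 0 := by
  rw [S.hherm, S.q_zero_right]; simp

lemma q_smul_left (c : ℂ) (x y : ↥S.D) :
    S.q (c • x) y = (starRingEnd ℂ) c * S.q x y := by
  rw [S.hherm, S.hsmulr, map_mul, ← S.hherm]

lemma q_neg_left (x y : ↥S.D) : S.q (-x) y = - S.q x y := by
  have := S.q_smul_left (-1) x y; simpa using this

lemma q_neg_right (x y : ↥S.D) : S.q x (-y) = - S.q x y := by
  have := S.hsmulr (-1) x y; simpa using this

lemma q_sub_left (x y z : ↥S.D) : S.q (x - y) z = S.q x z - S.q y z := by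
  rw [sub_eq_add_neg, S.haddl, S.q_neg_left, sub_eq_add_neg]

lemma q_sub_right (x y z : ↥S.D) : S.q x (y - z) = S.q x y - S.q x z := by
  rw [sub_eq_add_neg, S.haddr, S.q_neg_right, sub_eq_add_neg]

/-- the positive sector form -/
def qp (x y : ↥S.D) : ℂ := S.q (S.PpD x) (S.PpD y)
/-- the negative sector form -/
def qm (x y : ↥S.D) : ℂ := S.q (S.PmD x) (S.PmD y)

lemma qp_diag (x : ↥S.D) : S.qp x x = sectorDiag S.D S.q S.Pp S.hPpD x := rfl
lemma qm_diag (x : ↥S.D) : S.qm x x = sectorDiag S.D S.q S.Pm S.hPmD x := rfl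

/-- the graph inner product -/
noncomputable def t (x y : ↥S.D) : ℂ :=
  ((1 + S.a : ℝ) : ℂ) * ⟪S.Pp (x : H), S.Pp (y : H)⟫ + S.qp x y +
    (((1 + S.b : ℝ) : ℂ) * ⟪S.Pm (x : H), S.Pm (y : H)⟫ - S.qm x y)


section OperatorFacts

lemma hPmPp : S.Pm * S.Pp = 0 := by
  have h : S.Pm = 1 - S.Pp := by rw [← S.hsum]; abel
  rw [h, sub_mul, one_mul, S.hPp2, sub_self]

lemma Pp_apply_Pp (y : H) : S.Pp (S.Pp y) = S.Pp y := by
  have := congrFun (congrArg (fun T : H →L[ℂ] H => (T : H → H)) S.hPp2) y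
  simpa using this

lemma Pm_apply_Pm (y : H) : S.Pm (S.Pm y) = S.Pm y := by
  have := congrFun (congrArg (fun T : H →L[ℂ] H => (T : H → H)) S.hPm2) y
  simpa using this

lemma Pp_apply_Pm (y : H) : S.Pp (S.Pm y) = 0 := by
  have := congrFun (congrArg (fun T : H →L[ℂ] H => (T : H → H)) S.hPpPm) y
  simpa using this

lemma Pm_apply_Pp (y : H) : S.Pm (S.Pp y) = 0 := by
  have := congrFun (congrArg (fun T : H →L[ℂ] H => (T : H → H)) S.hPmPp) y
  simpa using this

lemma Pp_add_Pm (y : H) : S.Pp y + S.Pm y = y := by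
  have := congrFun (congrArg (fun T : H →L[ℂ] H => (T : H → H)) S.hsum) y
  simpa using this

lemma inner_Pp_Pp (x y : H) : ⟪S.Pp x, S.Pp y⟫ = ⟪x, S.Pp y⟫ := by
  simpa [S.Pp_apply_Pp] using S.hPpsa.isSymmetric x (S.Pp y)

lemma inner_Pm_Pm (x y : H) : ⟪S.Pm x, S.Pm y⟫ = ⟪x, S.Pm y⟫ := by
  simpa [S.Pm_apply_Pm] using S.hPmsa.isSymmetric x (S.Pm y)

lemma inner_Pp_Pm (x y : H) : ⟪S.Pp x, S.Pm y⟫ = 0 := by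
  have := S.hPpsa.isSymmetric x (S.Pm y)
  simp only [ContinuousLinearMap.coe_coe] at this
  rw [this, S.Pp_apply_Pm, inner_zero_right]

lemma inner_Pm_Pp (x y : H) : ⟪S.Pm x, S.Pp y⟫ = 0 := by
  have := S.hPmsa.isSymmetric x (S.Pp y)
  simp only [ContinuousLinearMap.coe_coe] at this
  rw [this, S.Pm_apply_Pp, inner_zero_right]

lemma norm_sq_decomp (x : H) : ‖S.Pp x‖ ^ 2 + ‖S.Pm x‖ ^ 2 = ‖x‖ ^ 2 := by
  have h : (⟪S.Pp x, S.Pp x⟫ : ℂ) + ⟪S.Pm x, S.Pm x⟫ = ⟪x, x⟫ := by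
    conv_rhs => rw [← S.Pp_add_Pm x]
    rw [inner_add_add_self, S.inner_Pp_Pm, S.inner_Pm_Pp]
    ring
  have := congrArg Complex.re h
  simpa [← inner_self_eq_norm_sq (𝕜 := ℂ), RCLike.re_to_complex] using this

end OperatorFacts

section FormFacts

@[simp] lemma PpD_PpD (x : ↥S.D) : S.PpD (S.PpD x) = S.PpD x := by
  ext; simp [S.Pp_apply_Pp]
@[simp] lemma PmD_PmD (x : ↥S.D) : S.PmD (S.PmD x) = S.PmD x := by
  ext; simp [S.Pm_apply_Pm]
@[simp] lemma PpD_PmD (x : ↥S.D) : S.PpD (S.PmD x) = 0 := by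
  ext; simp [S.Pp_apply_Pm]
@[simp] lemma PmD_PpD (x : ↥S.D) : S.PmD (S.PpD x) = 0 := by
  ext; simp [S.Pm_apply_Pp]
lemma PpD_add_PmD (x : ↥S.D) : S.PpD x + S.PmD x = x := by
  ext; simpa using S.Pp_add_Pm (x : H)

lemma qp_herm (x y : ↥S.D) : S.qp x y = (starRingEnd ℂ) (S.qp y x) := S.hherm _ _
lemma qm_herm (x y : ↥S.D) : S.qm x y = (starRingEnd ℂ) (S.qm y x) := S.hherm _ _

lemma qp_add_left (x y z : ↥S.D) : S.qp (x + y) z = S.qp x z + S.qp y z := by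
  unfold qp; rw [map_add, S.haddl]
lemma qp_add_right (x y z : ↥S.D) : S.qp x (y + z) = S.qp x y + S.qp x z := by
  unfold qp; rw [map_add, S.haddr]
lemma qp_smul_right (c : ℂ) (x y : ↥S.D) : S.qp x (c • y) = c * S.qp x y := by
  unfold qp; rw [map_smul, S.hsmulr]
lemma qp_smul_left (c : ℂ) (x y : ↥S.D) :
    S.qp (c • x) y = (starRingEnd ℂ) c * S.qp x y := by
  unfold qp; rw [map_smul, S.q_smul_left]
lemma qm_add_left (x y z : ↥S.D) : S.qm (x + y) z = S.qm x z + S.qm y z := by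
  unfold qm; rw [map_add, S.haddl]
lemma qm_add_right (x y z : ↥S.D) : S.qm x (y + z) = S.qm x y + S.qm x z := by
  unfold qm; rw [map_add, S.haddr]
lemma qm_smul_right (c : ℂ) (x y : ↥S.D) : S.qm x (c • y) = c * S.qm x y := by
  unfold qm; rw [map_smul, S.hsmulr]
lemma qm_smul_left (c : ℂ) (x y : ↥S.D) :
    S.qm (c • x) y = (starRingEnd ℂ) c * S.qm x y := by
  unfold qm; rw [map_smul, S.q_smul_left]

lemma q_diag_decomp (x : ↥S.D) : S.q x x = S.qp x x + S.qm x x := by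
  have h := S.hPOA (S.PpD x) (S.PmD x) ?_ ?_
  · rw [PpD_add_PmD] at h
    exact h
  · rw [coe_PmD, coe_PpD, S.Pp_apply_Pm, inner_zero_right]
  · rw [coe_PmD, coe_PpD, S.Pm_apply_Pp, inner_zero_left]

lemma q_eq_qp_add_qm (x y : ↥S.D) : S.q x y = S.qp x y + S.qm x y := by
  set r : ↥S.D → ↥S.D → ℂ := fun u v => S.q u v - S.qp u v - S.qm u v with hr
  have rdiag : ∀ u, r u u = 0 := fun u => by
    simp only [hr, S.q_diag_decomp u]; ring
  have radd : ∀ u v, r u v + r v u = 0 := by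
    intro u v
    have h := rdiag (u + v)
    have hu := rdiag u
    have hv := rdiag v
    simp only [hr, S.haddl, S.haddr, S.qp_add_left, S.qp_add_right, S.qm_add_left,
      S.qm_add_right] at h hu hv ⊢
    linear_combination h - hu - hv
  have rskew : ∀ u v, r u v = r v u := by
    intro u v
    have h := rdiag (u + Complex.I • v)
    have hu := rdiag u
    have hv := rdiag v
    simp only [hr, S.haddl, S.haddr, S.qp_add_left, S.qp_add_right, S.qm_add_left,
      S.qm_add_right, S.hsmulr, S.q_smul_left, S.qp_smul_right, S.qp_smul_left,
      S.qm_smul_right, S.qm_smul_left, Complex.conj_I] at h hu hv ⊢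
    linear_combination (-Complex.I) * h + Complex.I * hu + Complex.I * hv +
      ((S.q u v - S.qp u v - S.qm u v) - (S.q v u - S.qp v u - S.qm v u) -
        Complex.I * (S.q v v - S.qp v v - S.qm v v)) * Complex.I_sq
  have hz : r x y = 0 := by
    have h1 := radd x y
    have h2 := rskew x y
    linear_combination (h1 + h2) / 2 + (h2 - h2) / 2
  simp only [hr] at hz
  linear_combination hz

end FormFacts

section Core

lemma t_conj_symm (x y : ↥S.D) : (starRingEnd ℂ) (S.t y x) = S.t x y := by
  simp only [t, map_add, map_sub, map_mul, inner_conj_symm, ← S.qp_herm, ← S.qm_herm,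
    Complex.conj_ofReal]

lemma t_add_left (x y z : ↥S.D) : S.t (x + y) z = S.t x z + S.t y z := by
  simp only [t, Submodule.coe_add, map_add, inner_add_left, S.qp_add_left, S.qm_add_left]
  ring

lemma t_smul_left (c : ℂ) (x y : ↥S.D) :
    S.t (c • x) y = (starRingEnd ℂ) c * S.t x y := by
  simp only [t, Submodule.coe_smul, map_smul, inner_smul_left, S.qp_smul_left, S.qm_smul_left]
  ring

lemma re_ofReal_mul' (r : ℝ) (z : ℂ) : ((r : ℂ) * z).re = r * z.re := by
  simp [Complex.mul_re]

lemma t_re_diag (x : ↥S.D) : (S.t x x).re =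
    (1 + S.a) * ‖S.Pp (x : H)‖ ^ 2 + (S.qp x x).re +
      ((1 + S.b) * ‖S.Pm (x : H)‖ ^ 2 - (S.qm x x).re) := by
  simp only [t, Complex.add_re, Complex.sub_re, re_ofReal_mul']
  rw [← inner_self_eq_norm_sq (𝕜 := ℂ) (S.Pp (x : H)), ← inner_self_eq_norm_sq (𝕜 := ℂ) (S.Pm (x : H))]
  simp [RCLike.re_to_complex]

lemma t_re_diag_eq_graphNormSq (x : ↥S.D) :
    (S.t x x).re = graphNormSq S.D S.q S.Pp S.Pm S.hPpD S.hPmD S.a S.b x :=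
  S.t_re_diag x

lemma norm_sq_le_t_re (x : ↥S.D) : ‖(x : H)‖ ^ 2 ≤ (S.t x x).re := by
  have h1 := S.hlow x
  have h2 := S.hup x
  have h3 := S.norm_sq_decomp (x : H)
  rw [S.t_re_diag]
  rw [← S.qp_diag] at h1
  rw [← S.qm_diag] at h2
  nlinarith [sq_nonneg ‖S.Pp (x : H)‖, sq_nonneg ‖S.Pm (x : H)‖]

/-- The domain with the graph norm topology (type synonym). -/
@[nolint unusedArguments]
def Dt (S : POASetup H) : Type _ := ↥S.D

instance : AddCommGroup S.Dt := inferInstanceAs (AddCommGroup ↥S.D)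
instance : Module ℂ S.Dt := inferInstanceAs (Module ℂ ↥S.D)

/-- identity map `↥S.D → S.Dt` -/
def mkD (x : ↥S.D) : S.Dt := x
/-- identity map `S.Dt → ↥S.D` -/
def unmk (x : S.Dt) : ↥S.D := x

noncomputable def core : InnerProductSpace.Core ℂ S.Dt where
  inner x y := S.t (S.unmk x) (S.unmk y)
  conj_inner_symm x y := S.t_conj_symm _ _
  re_inner_nonneg x := le_trans (sq_nonneg _) (S.norm_sq_le_t_re (S.unmk x))
  add_left x y z := S.t_add_left _ _ _
  smul_left x y c := S.t_smul_left _ _ _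
  definite x hx := by
    have h := S.norm_sq_le_t_re (S.unmk x)
    rw [show S.t (S.unmk x) (S.unmk x) = (0 : ℂ) from hx] at h
    simp only [Complex.zero_re] at h
    have : ‖((S.unmk x : ↥S.D) : H)‖ = 0 := by
      have := sq_nonneg ‖((S.unmk x : ↥S.D) : H)‖
      nlinarith
    have hx0 : ((S.unmk x : ↥S.D) : H) = 0 := by simpa using this
    show S.unmk x = 0
    exact Subtype.ext hx0

noncomputable instance : NormedAddCommGroup S.Dt := S.core.toNormedAddCommGroup
noncomputable instance : InnerProductSpace ℂ S.Dt := InnerProductSpace.ofCore S.core.toCore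

lemma inner_Dt (x y : ↥S.D) : (⟪S.mkD x, S.mkD y⟫ : ℂ) = S.t x y := rfl

lemma norm_Dt_sq (x : ↥S.D) : ‖S.mkD x‖ ^ 2 = (S.t x x).re := by
  rw [← inner_self_eq_norm_sq (𝕜 := ℂ) (S.mkD x)]
  rfl

lemma norm_coe_le_norm_Dt (x : ↥S.D) : ‖(x : H)‖ ≤ ‖S.mkD x‖ := by
  have h := S.norm_sq_le_t_re x
  rw [← S.norm_Dt_sq] at h
  nlinarith [norm_nonneg (x : H), norm_nonneg (S.mkD x)]

end Core

section Sectors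

lemma qp_PpD_left (x y : ↥S.D) : S.qp (S.PpD x) y = S.qp x y := by
  unfold qp; rw [PpD_PpD]
lemma qp_PpD_right (x y : ↥S.D) : S.qp x (S.PpD y) = S.qp x y := by
  unfold qp; rw [PpD_PpD]
lemma qp_PmD_left (x y : ↥S.D) : S.qp (S.PmD x) y = 0 := by
  unfold qp; rw [PpD_PmD]; exact S.q_zero_left _
lemma qp_PmD_right (x y : ↥S.D) : S.qp x (S.PmD y) = 0 := by
  unfold qp; rw [PpD_PmD]; exact S.q_zero_right _
lemma qm_PmD_left (x y : ↥S.D) : S.qm (S.PmD x) y = S.qm x y := by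
  unfold qm; rw [PmD_PmD]
lemma qm_PmD_right (x y : ↥S.D) : S.qm x (S.PmD y) = S.qm x y := by
  unfold qm; rw [PmD_PmD]
lemma qm_PpD_left (x y : ↥S.D) : S.qm (S.PpD x) y = 0 := by
  unfold qm; rw [PmD_PpD]; exact S.q_zero_left _
lemma qm_PpD_right (x y : ↥S.D) : S.qm x (S.PpD y) = 0 := by
  unfold qm; rw [PmD_PpD]; exact S.q_zero_right _

lemma t_pp (x y : ↥S.D) :
    S.t (S.PpD x) (S.PpD y) = ((1 + S.a : ℝ) : ℂ) * ⟪S.Pp (x : H), S.Pp (y : H)⟫ + S.qp x y := by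
  simp only [t, coe_PpD, S.Pp_apply_Pp, S.Pm_apply_Pp, S.qp_PpD_left, S.qp_PpD_right,
    S.qm_PpD_left, inner_zero_left, mul_zero]
  ring

lemma t_mm (x y : ↥S.D) :
    S.t (S.PmD x) (S.PmD y) = ((1 + S.b : ℝ) : ℂ) * ⟪S.Pm (x : H), S.Pm (y : H)⟫ - S.qm x y := by
  simp only [t, coe_PmD, S.Pm_apply_Pm, S.Pp_apply_Pm, S.qm_PmD_left, S.qm_PmD_right,
    S.qp_PmD_left, inner_zero_left, mul_zero]
  ring

lemma t_pm (x y : ↥S.D) : S.t (S.PpD x) (S.PmD y) = 0 := by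
  simp only [t, coe_PpD, coe_PmD, S.Pp_apply_Pm, S.Pm_apply_Pp, S.Pp_apply_Pp, S.Pm_apply_Pm,
    S.qp_PmD_right, S.qm_PpD_left, inner_zero_right, inner_zero_left, mul_zero]
  ring

lemma t_mp (x y : ↥S.D) : S.t (S.PmD x) (S.PpD y) = 0 := by
  simp only [t, coe_PpD, coe_PmD, S.Pp_apply_Pm, S.Pm_apply_Pp, S.Pp_apply_Pp, S.Pm_apply_Pm,
    S.qp_PpD_right, S.qp_PmD_left, S.qm_PpD_right, S.qm_PmD_left, inner_zero_right,
    inner_zero_left, mul_zero]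
  norm_num

lemma t_decomp (x y : ↥S.D) :
    S.t x y = S.t (S.PpD x) (S.PpD y) + S.t (S.PmD x) (S.PmD y) := by
  rw [S.t_pp, S.t_mm]
  simp only [t]
  try ring

lemma t_pp_diag_nonneg (x : ↥S.D) : 0 ≤ (S.t (S.PpD x) (S.PpD x)).re := by
  have h := S.hlow x
  rw [← S.qp_diag] at h
  have : (S.t (S.PpD x) (S.PpD x)).re = (1 + S.a) * ‖S.Pp (x : H)‖ ^ 2 + (S.qp x x).re := by
    rw [S.t_pp]
    rw [← inner_self_eq_norm_sq (𝕜 := ℂ) (S.Pp (x : H))]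
    simp [re_ofReal_mul', RCLike.re_to_complex]
  rw [this]
  nlinarith [sq_nonneg ‖S.Pp (x : H)‖]

lemma t_mm_diag_nonneg (x : ↥S.D) : 0 ≤ (S.t (S.PmD x) (S.PmD x)).re := by
  have h := S.hup x
  rw [← S.qm_diag] at h
  have : (S.t (S.PmD x) (S.PmD x)).re = (1 + S.b) * ‖S.Pm (x : H)‖ ^ 2 - (S.qm x x).re := by
    rw [S.t_mm]
    rw [← inner_self_eq_norm_sq (𝕜 := ℂ) (S.Pm (x : H))]
    simp [re_ofReal_mul', RCLike.re_to_complex]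
  rw [this]
  nlinarith [sq_nonneg ‖S.Pm (x : H)‖]

lemma norm_PpD_le (x : ↥S.D) : ‖S.mkD (S.PpD x)‖ ≤ ‖S.mkD x‖ := by
  have h1 : ‖S.mkD (S.PpD x)‖ ^ 2 ≤ ‖S.mkD x‖ ^ 2 := by
    rw [S.norm_Dt_sq, S.norm_Dt_sq, S.t_decomp x x]
    have := S.t_mm_diag_nonneg x
    simp only [Complex.add_re]
    linarith
  nlinarith [norm_nonneg (S.mkD (S.PpD x)), norm_nonneg (S.mkD x)]

lemma norm_PmD_le (x : ↥S.D) : ‖S.mkD (S.PmD x)‖ ≤ ‖S.mkD x‖ := by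
  have h1 : ‖S.mkD (S.PmD x)‖ ^ 2 ≤ ‖S.mkD x‖ ^ 2 := by
    rw [S.norm_Dt_sq, S.norm_Dt_sq, S.t_decomp x x]
    have := S.t_pp_diag_nonneg x
    simp only [Complex.add_re]
    linarith
  nlinarith [norm_nonneg (S.mkD (S.PmD x)), norm_nonneg (S.mkD x)]

end Sectors

section CompletionSpace

open UniformSpace in
/-- The completion of the form domain. -/
abbrev V (S : POASetup H) : Type _ := UniformSpace.Completion S.Dt

/-- The inclusion `Dt → H` as a continuous linear map. -/
noncomputable def idDL : S.Dt →L[ℂ] H :=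
  LinearMap.mkContinuous
    { toFun := fun x => ((S.unmk x : ↥S.D) : H)
      map_add' := fun x y => rfl
      map_smul' := fun c x => rfl }
    1 (fun x => by rw [one_mul]; exact S.norm_coe_le_norm_Dt (S.unmk x))

@[simp] lemma idDL_apply (x : ↥S.D) : S.idDL (S.mkD x) = (x : H) := rfl

/-- `Pp` as a continuous linear map on `Dt`. -/
noncomputable def PpL : S.Dt →L[ℂ] S.Dt :=
  LinearMap.mkContinuous
    { toFun := fun x => S.mkD (S.PpD (S.unmk x))
      map_add' := fun x y => congrArg S.mkD (S.PpD.map_add (S.unmk x) (S.unmk y))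
      map_smul' := fun c x => congrArg S.mkD (S.PpD.map_smul c (S.unmk x)) }
    1 (fun x => by rw [one_mul]; exact S.norm_PpD_le (S.unmk x))

noncomputable def PmL : S.Dt →L[ℂ] S.Dt :=
  LinearMap.mkContinuous
    { toFun := fun x => S.mkD (S.PmD (S.unmk x))
      map_add' := fun x y => congrArg S.mkD (S.PmD.map_add (S.unmk x) (S.unmk y))
      map_smul' := fun c x => congrArg S.mkD (S.PmD.map_smul c (S.unmk x)) }
    1 (fun x => by rw [one_mul]; exact S.norm_PmD_le (S.unmk x))

@[simp] lemma PpL_apply (x : ↥S.D) : S.PpL (S.mkD x) = S.mkD (S.PpD x) := rfl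
@[simp] lemma PmL_apply (x : ↥S.D) : S.PmL (S.mkD x) = S.mkD (S.PmD x) := rfl

lemma denseRange_toComplL :
    DenseRange (UniformSpace.Completion.toComplL : S.Dt →L[ℂ] S.V) := by
  rw [UniformSpace.Completion.coe_toComplL]
  exact UniformSpace.Completion.denseRange_coe

lemma isUniformInducing_toComplL :
    IsUniformInducing (UniformSpace.Completion.toComplL : S.Dt →L[ℂ] S.V) := by
  rw [UniformSpace.Completion.coe_toComplL]
  exact UniformSpace.Completion.isUniformInducing_coe _

/-- The canonical embedding of the completion into `H`. -/
noncomputable def iota : S.V →L[ℂ] H :=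
  S.idDL.extend UniformSpace.Completion.toComplL

@[simp] lemma iota_coe (x : ↥S.D) : S.iota ((S.mkD x : S.Dt) : S.V) = (x : H) := by
  have h := ContinuousLinearMap.extend_eq S.idDL
    S.denseRange_toComplL S.isUniformInducing_toComplL (S.mkD x)
  rw [show (UniformSpace.Completion.toComplL : S.Dt →L[ℂ] S.V) (S.mkD x)
    = ((S.mkD x : S.Dt) : S.V) from congrFun (UniformSpace.Completion.coe_toComplL) _] at h
  exact h

/-- The extension of `Pp` to the completion. -/
noncomputable def PpV : S.V →L[ℂ] S.V :=
  ((UniformSpace.Completion.toComplL : S.Dt →L[ℂ] S.V).comp S.PpL).extend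
    UniformSpace.Completion.toComplL

noncomputable def PmV : S.V →L[ℂ] S.V :=
  ((UniformSpace.Completion.toComplL : S.Dt →L[ℂ] S.V).comp S.PmL).extend
    UniformSpace.Completion.toComplL

@[simp] lemma PpV_coe (x : ↥S.D) :
    S.PpV ((S.mkD x : S.Dt) : S.V) = ((S.mkD (S.PpD x) : S.Dt) : S.V) := by
  have h := ContinuousLinearMap.extend_eq
    ((UniformSpace.Completion.toComplL : S.Dt →L[ℂ] S.V).comp S.PpL)
    S.denseRange_toComplL S.isUniformInducing_toComplL (S.mkD x)
  rw [show (UniformSpace.Completion.toComplL : S.Dt →L[ℂ] S.V) (S.mkD x)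
    = ((S.mkD x : S.Dt) : S.V) from congrFun (UniformSpace.Completion.coe_toComplL) _] at h
  exact h.trans (by
    simp only [ContinuousLinearMap.comp_apply, PpL_apply]
    exact congrFun (UniformSpace.Completion.coe_toComplL) _)

@[simp] lemma PmV_coe (x : ↥S.D) :
    S.PmV ((S.mkD x : S.Dt) : S.V) = ((S.mkD (S.PmD x) : S.Dt) : S.V) := by
  have h := ContinuousLinearMap.extend_eq
    ((UniformSpace.Completion.toComplL : S.Dt →L[ℂ] S.V).comp S.PmL)
    S.denseRange_toComplL S.isUniformInducing_toComplL (S.mkD x)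
  rw [show (UniformSpace.Completion.toComplL : S.Dt →L[ℂ] S.V) (S.mkD x)
    = ((S.mkD x : S.Dt) : S.V) from congrFun (UniformSpace.Completion.coe_toComplL) _] at h
  exact h.trans (by
    simp only [ContinuousLinearMap.comp_apply, PmL_apply]
    exact congrFun (UniformSpace.Completion.coe_toComplL) _)

/-- The involution `J` on the completion. -/
noncomputable def JV : S.V →L[ℂ] S.V := S.PpV - S.PmV

@[simp] lemma JV_coe (x : ↥S.D) :
    S.JV ((S.mkD x : S.Dt) : S.V) = ((S.mkD (S.PpD x - S.PmD x) : S.Dt) : S.V) := by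
  simp only [JV, ContinuousLinearMap.sub_apply, PpV_coe, PmV_coe]
  rw [show (S.mkD (S.PpD x - S.PmD x) : S.Dt) = S.mkD (S.PpD x) - S.mkD (S.PmD x) from rfl]
  push_cast [UniformSpace.Completion.coe_sub]
  rfl

end CompletionSpace

section Identities

lemma t_add_right (x y z : ↥S.D) : S.t x (y + z) = S.t x y + S.t x z := by
  rw [← S.t_conj_symm x (y + z), S.t_add_left, map_add, S.t_conj_symm, S.t_conj_symm]

lemma t_sub_left (x y z : ↥S.D) : S.t (x - y) z = S.t x z - S.t y z := by
  have h := S.t_add_left (x - y) y z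
  rw [sub_add_cancel] at h
  linear_combination -h

lemma t_sub_right (x y z : ↥S.D) : S.t x (y - z) = S.t x y - S.t x z := by
  rw [← S.t_conj_symm x (y - z), S.t_sub_left, map_sub, S.t_conj_symm, S.t_conj_symm]

lemma t_PpD_left (x y : ↥S.D) : S.t (S.PpD x) y = S.t (S.PpD x) (S.PpD y) := by
  conv_lhs => rw [← S.PpD_add_PmD y]
  rw [S.t_add_right, S.t_pm, add_zero]

lemma t_PmD_left (x y : ↥S.D) : S.t (S.PmD x) y = S.t (S.PmD x) (S.PmD y) := by
  conv_lhs => rw [← S.PpD_add_PmD y]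
  rw [S.t_add_right, S.t_mp, zero_add]

lemma t_PpD_right (x y : ↥S.D) : S.t x (S.PpD y) = S.t (S.PpD x) (S.PpD y) := by
  conv_lhs => rw [← S.PpD_add_PmD x]
  rw [S.t_add_left, S.t_mp, add_zero]

lemma t_PmD_right (x y : ↥S.D) : S.t x (S.PmD y) = S.t (S.PmD x) (S.PmD y) := by
  conv_lhs => rw [← S.PpD_add_PmD x]
  rw [S.t_add_left, S.t_pm, zero_add]

lemma t_JD_symm (x y : ↥S.D) :
    S.t (S.PpD x - S.PmD x) y = S.t x (S.PpD y - S.PmD y) := by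
  rw [S.t_sub_left, S.t_sub_right, S.t_PpD_left x y, S.t_PmD_left x y, S.t_PpD_right x y,
    S.t_PmD_right x y]

lemma JD_JD (x : ↥S.D) :
    S.PpD (S.PpD x - S.PmD x) - S.PmD (S.PpD x - S.PmD x) = x := by
  simp only [map_sub, PpD_PpD, PpD_PmD, PmD_PpD, PmD_PmD, sub_zero, zero_sub, sub_neg_eq_add]
  exact S.PpD_add_PmD x

lemma inner_V_coe (x y : ↥S.D) :
    (⟪((S.mkD x : S.Dt) : S.V), ((S.mkD y : S.Dt) : S.V)⟫ : ℂ) = S.t x y := by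
  rw [UniformSpace.Completion.inner_coe]
  rfl

lemma JV_JV_apply (u : S.V) : S.JV (S.JV u) = u := by
  have : (fun u : S.V => S.JV (S.JV u)) = fun u : S.V => u := by
    refine UniformSpace.Completion.denseRange_coe.equalizer
      (S.JV.continuous.comp S.JV.continuous) continuous_id ?_
    funext x
    show S.JV (S.JV ((S.mkD (S.unmk x) : S.Dt) : S.V)) = _
    rw [JV_coe, JV_coe, S.JD_JD]
    rfl
  exact congrFun this u

lemma JV_symm (u v : S.V) : (⟪S.JV u, v⟫ : ℂ) = ⟪u, S.JV v⟫ := by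
  have hd : DenseRange (fun p : S.Dt × S.Dt => ((p.1 : S.V), (p.2 : S.V))) :=
    UniformSpace.Completion.denseRange_coe₂
  have h : (fun p : S.V × S.V => (⟪S.JV p.1, p.2⟫ : ℂ)) =
      fun p : S.V × S.V => (⟪p.1, S.JV p.2⟫ : ℂ) := by
    refine hd.equalizer ?_ ?_ ?_
    · exact UniformSpace.Completion.Continuous.inner
        (S.JV.continuous.comp continuous_fst) continuous_snd
    · exact UniformSpace.Completion.Continuous.inner continuous_fst
        (S.JV.continuous.comp continuous_snd)
    · funext p
      show (⟪S.JV ((S.mkD (S.unmk p.1) : S.Dt) : S.V), ((S.mkD (S.unmk p.2) : S.Dt) : S.V)⟫ : ℂ)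
        = ⟪((S.mkD (S.unmk p.1) : S.Dt) : S.V), S.JV ((S.mkD (S.unmk p.2) : S.Dt) : S.V)⟫
      rw [JV_coe, JV_coe, S.inner_V_coe, S.inner_V_coe, S.t_JD_symm]
  exact congrFun h (u, v)

end Identities

section Injectivity

lemma t_pp_diag_eq (x : ↥S.D) :
    (S.t (S.PpD x) (S.PpD x)).re = (1 + S.a) * ‖S.Pp (x : H)‖ ^ 2 + (S.qp x x).re := by
  rw [S.t_pp]
  rw [← inner_self_eq_norm_sq (𝕜 := ℂ) (S.Pp (x : H))]
  simp [re_ofReal_mul', RCLike.re_to_complex]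

lemma t_mm_diag_eq (x : ↥S.D) :
    (S.t (S.PmD x) (S.PmD x)).re = (1 + S.b) * ‖S.Pm (x : H)‖ ^ 2 - (S.qm x x).re := by
  rw [S.t_mm]
  rw [← inner_self_eq_norm_sq (𝕜 := ℂ) (S.Pm (x : H))]
  simp [re_ofReal_mul', RCLike.re_to_complex]

lemma graphNormSq_eq (x : ↥S.D) :
    graphNormSq S.D S.q S.Pp S.Pm S.hPpD S.hPmD S.a S.b x = ‖S.mkD x‖ ^ 2 := by
  rw [S.norm_Dt_sq, S.t_re_diag_eq_graphNormSq]

lemma plus_part_le (x : ↥S.D) :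
    (1 + S.a) * ‖S.Pp (x : H)‖ ^ 2 + (sectorDiag S.D S.q S.Pp S.hPpD x).re ≤ ‖S.mkD x‖ ^ 2 := by
  rw [S.norm_Dt_sq, S.t_decomp x x, Complex.add_re, ← S.qp_diag, ← S.t_pp_diag_eq]
  have := S.t_mm_diag_nonneg x
  linarith

lemma minus_part_le (x : ↥S.D) :
    (1 + S.b) * ‖S.Pm (x : H)‖ ^ 2 - (sectorDiag S.D S.q S.Pm S.hPmD x).re ≤ ‖S.mkD x‖ ^ 2 := by
  rw [S.norm_Dt_sq, S.t_decomp x x, Complex.add_re, ← S.qm_diag, ← S.t_mm_diag_eq]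
  have := S.t_pp_diag_nonneg x
  linarith

lemma coe_V_tendsto {u : ℕ → S.Dt} {w : S.Dt}
    (h : Tendsto u atTop (nhds w)) : Tendsto (fun n => ((u n : S.Dt) : S.V)) atTop
      (nhds ((w : S.Dt) : S.V)) :=
  (UniformSpace.Completion.continuous_coe _).continuousAt.tendsto.comp h

lemma cauchySeq_of_tendsto_V {u : ℕ → S.Dt} {v : S.V}
    (h : Tendsto (fun n => ((u n : S.Dt) : S.V)) atTop (nhds v)) : CauchySeq u := by
  have h1 : CauchySeq (fun n => ((u n : S.Dt) : S.V)) := h.cauchySeq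
  rw [Metric.cauchySeq_iff] at h1 ⊢
  intro ε hε
  obtain ⟨N, hN⟩ := h1 ε hε
  exact ⟨N, fun m hm n hn => by
    have := hN m hm n hn
    rwa [UniformSpace.Completion.dist_eq] at this⟩

/-- The closability argument: the canonical map `V → H` is injective. -/
lemma iota_ker (v : S.V) (hv : S.iota v = 0) : v = 0 := by
  have hd : v ∈ closure (Set.range ((↑) : S.Dt → S.V)) :=
    UniformSpace.Completion.denseRange_coe v
  obtain ⟨f, hf_mem, hf_tendsto⟩ := mem_closure_iff_seq_limit.mp hd
  choose g hg using hf_mem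
  have hg_tendsto : Tendsto (fun n => ((g n : S.Dt) : S.V)) atTop (nhds v) := by
    simpa only [hg] using hf_tendsto
  have hcau : CauchySeq g := S.cauchySeq_of_tendsto_V hg_tendsto
  set Φ : ℕ → ↥S.D := fun n => S.unmk (g n) with hΦ
  -- the elements of the sequence, seen in `H`, converge to `iota v = 0`
  have hH_tendsto : Tendsto (fun n => ((Φ n : ↥S.D) : H)) atTop (nhds 0) := by
    have := (S.iota.continuous.tendsto v).comp hg_tendsto
    rw [hv] at this
    convert this using 2 with n
    exact (S.iota_coe (Φ n)).symm
  -- Cauchy control on each sector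
  have hcau2 : ∀ ε > 0, ∃ N, ∀ m ≥ N, ∀ n ≥ N, ‖g m - g n‖ ^ 2 < ε := by
    intro ε hε
    rw [Metric.cauchySeq_iff] at hcau
    obtain ⟨N, hN⟩ := hcau (Real.sqrt ε) (Real.sqrt_pos.mpr hε)
    refine ⟨N, fun m hm n hn => ?_⟩
    have h1 := hN m hm n hn
    rw [dist_eq_norm] at h1
    have h2 : ‖g m - g n‖ ^ 2 < Real.sqrt ε ^ 2 := by
      have := norm_nonneg (g m - g n)
      nlinarith
    rwa [Real.sq_sqrt hε.le] at h2
  have hplus : ∀ ε > 0, ∃ N : ℕ, ∀ m ≥ N, ∀ n ≥ N,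
      (1 + S.a) * ‖S.Pp ((Φ m : H) - (Φ n : H))‖ ^ 2 +
        (sectorDiag S.D S.q S.Pp S.hPpD (Φ m - Φ n)).re < ε := by
    intro ε hε
    obtain ⟨N, hN⟩ := hcau2 ε hε
    refine ⟨N, fun m hm n hn => ?_⟩
    have h1 := S.plus_part_le (Φ m - Φ n)
    have h2 : S.mkD (Φ m - Φ n) = g m - g n := rfl
    rw [h2] at h1
    have h3 : ((Φ m - Φ n : ↥S.D) : H) = (Φ m : H) - (Φ n : H) := rfl
    rw [h3] at h1
    exact lt_of_le_of_lt h1 (hN m hm n hn)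
  have hminus : ∀ ε > 0, ∃ N : ℕ, ∀ m ≥ N, ∀ n ≥ N,
      (1 + S.b) * ‖S.Pm ((Φ m : H) - (Φ n : H))‖ ^ 2 -
        (sectorDiag S.D S.q S.Pm S.hPmD (Φ m - Φ n)).re < ε := by
    intro ε hε
    obtain ⟨N, hN⟩ := hcau2 ε hε
    refine ⟨N, fun m hm n hn => ?_⟩
    have h1 := S.minus_part_le (Φ m - Φ n)
    have h2 : S.mkD (Φ m - Φ n) = g m - g n := rfl
    rw [h2] at h1
    have h3 : ((Φ m - Φ n : ↥S.D) : H) = (Φ m : H) - (Φ n : H) := rfl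
    rw [h3] at h1
    exact lt_of_le_of_lt h1 (hN m hm n hn)
  -- apply closability
  have hPp0 : Tendsto (fun n => S.Pp ((Φ n : ↥S.D) : H)) atTop (nhds 0) := by
    have := (S.Pp.continuous.tendsto 0).comp hH_tendsto
    simpa [Function.comp_def] using this
  have hPm0 : Tendsto (fun n => S.Pm ((Φ n : ↥S.D) : H)) atTop (nhds 0) := by
    have := (S.Pm.continuous.tendsto 0).comp hH_tendsto
    simpa [Function.comp_def] using this
  have hqp := S.hclosp Φ hplus hPp0
  have hqm := S.hclosm Φ hminus hPm0
  have hPpn : Tendsto (fun n => ‖S.Pp ((Φ n : ↥S.D) : H)‖ ^ 2) atTop (nhds 0) := by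
    have h1 : Tendsto (fun n => ‖S.Pp ((Φ n : ↥S.D) : H)‖) atTop (nhds 0) := by
      simpa [Function.comp_def] using (continuous_norm.tendsto (0 : H)).comp hPp0
    simpa using h1.pow 2
  have hPmn : Tendsto (fun n => ‖S.Pm ((Φ n : ↥S.D) : H)‖ ^ 2) atTop (nhds 0) := by
    have h1 : Tendsto (fun n => ‖S.Pm ((Φ n : ↥S.D) : H)‖) atTop (nhds 0) := by
      simpa [Function.comp_def] using (continuous_norm.tendsto (0 : H)).comp hPm0
    simpa using h1.pow 2
  have hsq : Tendsto (fun n => ‖g n‖ ^ 2) atTop (nhds 0) := by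
    have hexp : ∀ n, ‖g n‖ ^ 2 =
        (1 + S.a) * ‖S.Pp ((Φ n : ↥S.D) : H)‖ ^ 2 + (sectorDiag S.D S.q S.Pp S.hPpD (Φ n)).re +
          ((1 + S.b) * ‖S.Pm ((Φ n : ↥S.D) : H)‖ ^ 2 -
            (sectorDiag S.D S.q S.Pm S.hPmD (Φ n)).re) := fun n => by
      have := S.graphNormSq_eq (Φ n)
      rw [show S.mkD (Φ n) = g n from rfl] at this
      rw [← this]
      rfl
    simp only [hexp]
    have := (((hPpn.const_mul (1 + S.a)).add hqp).add
      ((hPmn.const_mul (1 + S.b)).sub hqm))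
    simpa using this
  have hgnorm : Tendsto (fun n => ‖g n‖) atTop (nhds 0) := by
    have h1 := (Real.continuous_sqrt.tendsto 0).comp hsq
    simp only [Function.comp_def] at h1
    rw [Real.sqrt_zero] at h1
    convert h1 using 2 with n
    show ‖g n‖ = Real.sqrt (‖g n‖ ^ 2)
    rw [Real.sqrt_sq (norm_nonneg _)]
  have hg0 : Tendsto g atTop (nhds (0 : S.Dt)) := by
    rw [tendsto_zero_iff_norm_tendsto_zero]
    exact hgnorm
  have hgV : Tendsto (fun n => ((g n : S.Dt) : S.V)) atTop (nhds 0) := by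
    have := S.coe_V_tendsto hg0
    rwa [show (((0 : S.Dt) : S.V)) = 0 from UniformSpace.Completion.coe_zero] at this
  exact tendsto_nhds_unique hg_tendsto hgV

lemma iota_injective : Function.Injective S.iota := by
  intro u w huw
  have h : S.iota (u - w) = 0 := by rw [map_sub, huw, sub_self]
  have := S.iota_ker (u - w) h
  rwa [sub_eq_zero] at this

end Injectivity

section OperatorA

lemma denseRange_iota : DenseRange S.iota := by
  have hsub : (S.D : Set H) ⊆ Set.range S.iota := by
    intro d hd
    exact ⟨((S.mkD ⟨d, hd⟩ : S.Dt) : S.V), S.iota_coe ⟨d, hd⟩⟩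
  exact Dense.mono hsub S.hD

/-- The adjoint of the embedding `iota`. -/
noncomputable def G : H →L[ℂ] S.V := ContinuousLinearMap.adjoint S.iota

lemma inner_G (u : S.V) (f : H) : (⟪u, S.G f⟫ : ℂ) = ⟪S.iota u, f⟫ :=
  ContinuousLinearMap.adjoint_inner_right S.iota u f

lemma inner_G_left (f : H) (u : S.V) : (⟪S.G f, u⟫ : ℂ) = ⟪f, S.iota u⟫ :=
  ContinuousLinearMap.adjoint_inner_left S.iota u f

lemma G_injective : Function.Injective S.G := by
  have key : ∀ f : H, S.G f = 0 → f = 0 := by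
    intro f hf
    have h1 : ∀ u : S.V, (⟪S.iota u, f⟫ : ℂ) = 0 := fun u => by
      rw [← S.inner_G u f, hf, inner_zero_right]
    have h2 : (fun y : H => (⟪y, f⟫ : ℂ)) = fun _ => 0 := by
      refine S.denseRange_iota.equalizer ?_ continuous_const ?_
      · exact (continuous_id.inner continuous_const)
      · funext u; exact h1 u
    have h3 := congrFun h2 f
    simpa [inner_self_eq_zero] using h3
  intro u w huw
  have h : S.G (u - w) = 0 := by rw [map_sub, huw, sub_self]
  have := key (u - w) h
  rwa [sub_eq_zero] at this

/-- The bounded self-adjoint correction operator. -/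
noncomputable def RR : H →L[ℂ] H :=
  ((1 + S.a : ℝ) : ℂ) • S.Pp - ((1 + S.b : ℝ) : ℂ) • S.Pm

lemma RR_symm (x y : H) : (⟪S.RR x, y⟫ : ℂ) = ⟪x, S.RR y⟫ := by
  simp only [RR, ContinuousLinearMap.sub_apply, ContinuousLinearMap.smul_apply,
    inner_sub_left, inner_sub_right, inner_smul_left, inner_smul_right, Complex.conj_ofReal]
  have h1 := S.hPpsa.isSymmetric x y
  have h2 := S.hPmsa.isSymmetric x y
  simp only [ContinuousLinearMap.coe_coe] at h1 h2
  rw [h1, h2]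

/-- The bounded, self-adjoint, injective operator whose inverse carries the form. -/
noncomputable def A : H →L[ℂ] H := S.iota ∘L S.JV ∘L S.G

lemma A_apply (f : H) : S.A f = S.iota (S.JV (S.G f)) := rfl

lemma A_symm (f g : H) : (⟪S.A f, g⟫ : ℂ) = ⟪f, S.A g⟫ := by
  rw [S.A_apply, S.A_apply, ← S.inner_G (S.JV (S.G f)) g, S.JV_symm, ← S.inner_G_left]

lemma A_injective : Function.Injective S.A := by
  intro u w huw
  have h0 : S.iota (S.JV (S.G u)) = S.iota (S.JV (S.G w)) := huw
  have h1 : S.JV (S.G u) = S.JV (S.G w) := S.iota_injective h0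
  have h2 : S.G u = S.G w := by
    have := congrArg S.JV h1
    rwa [S.JV_JV_apply, S.JV_JV_apply] at this
  exact S.G_injective h2

/-- The domain of the operator `T`. -/
noncomputable def domT : Submodule ℂ H := LinearMap.range (S.A : H →ₗ[ℂ] H)

lemma mem_domT (f : H) : S.A f ∈ S.domT := ⟨f, rfl⟩

lemma domT_dense : Dense (S.domT : Set H) := by
  rw [Submodule.dense_iff_topologicalClosure_eq_top, Submodule.topologicalClosure_eq_top_iff]
  rw [Submodule.eq_bot_iff]
  intro y hy
  rw [Submodule.mem_orthogonal] at hy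
  have h1 : ∀ f : H, (⟪f, S.A y⟫ : ℂ) = 0 := fun f => by
    rw [← S.A_symm]
    exact hy (S.A f) (S.mem_domT f)
  have h2 : S.A y = 0 := by
    have := h1 (S.A y)
    rwa [inner_self_eq_zero] at this
  have := S.A_injective (h2.trans (map_zero S.A).symm)
  exact this

end OperatorA

section FormOperator

lemma q_formula (x y : ↥S.D) :
    S.q x y = S.t x (S.PpD y - S.PmD y) - ⟪(x : H), S.RR (y : H)⟫ := by
  rw [S.t_sub_right, S.t_PpD_right, S.t_PmD_right, S.t_pp, S.t_mm, S.q_eq_qp_add_qm]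
  simp only [RR, ContinuousLinearMap.sub_apply, ContinuousLinearMap.smul_apply,
    inner_sub_right, inner_smul_right]
  rw [S.inner_Pp_Pp, S.inner_Pm_Pm]
  ring

/-- The closure of the quadratic form on the completion. -/
noncomputable def Qbar (u v : S.V) : ℂ :=
  ⟪u, S.JV v⟫ - ⟪S.iota u, S.RR (S.iota v)⟫

lemma Qbar_coe (x y : ↥S.D) :
    S.Qbar ((S.mkD x : S.Dt) : S.V) ((S.mkD y : S.Dt) : S.V) = S.q x y := by
  rw [Qbar, JV_coe, inner_V_coe, iota_coe, iota_coe, S.q_formula]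

lemma Qbar_herm (u v : S.V) : (starRingEnd ℂ) (S.Qbar v u) = S.Qbar u v := by
  rw [Qbar, Qbar, map_sub, inner_conj_symm, inner_conj_symm, S.JV_symm, S.RR_symm]

lemma Qbar_continuous_right (u : S.V) : Continuous (fun v => S.Qbar u v) := by
  unfold Qbar
  refine Continuous.sub ?_ ?_
  · exact UniformSpace.Completion.Continuous.inner continuous_const
      (S.JV.continuous.comp continuous_id)
  · exact Continuous.inner continuous_const
      (S.RR.continuous.comp (S.iota.continuous.comp continuous_id))

lemma Qbar_continuous_left (v : S.V) : Continuous (fun u => S.Qbar u v) := by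
  unfold Qbar
  refine Continuous.sub ?_ ?_
  · exact UniformSpace.Completion.Continuous.inner (continuous_id) continuous_const
  · exact Continuous.inner (S.iota.continuous.comp continuous_id) continuous_const

lemma Qbar_JVG (u : S.V) (f : H) :
    S.Qbar u (S.JV (S.G f)) = ⟪S.iota u, f - S.RR (S.A f)⟫ := by
  rw [Qbar, S.JV_JV_apply, S.inner_G, inner_sub_right, S.A_apply]

/-- The self-adjoint operator representing the quadratic form. -/
noncomputable def T : H →ₗ.[ℂ] H where
  domain := LinearMap.range (S.A : H →ₗ[ℂ] H)
  toFun := (LinearEquiv.ofInjective (S.A : H →ₗ[ℂ] H) S.A_injective).symm.toLinearMap -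
    ((S.RR : H →ₗ[ℂ] H).comp (LinearMap.range (S.A : H →ₗ[ℂ] H)).subtype)

lemma T_domain : S.T.domain = S.domT := rfl

lemma T_domain_dense : Dense (S.T.domain : Set H) := S.domT_dense

lemma Tspec (f : H) : S.T ⟨S.A f, S.mem_domT f⟩ = f - S.RR (S.A f) := by
  have h1 : S.A ((LinearEquiv.ofInjective (S.A : H →ₗ[ℂ] H) S.A_injective).symm
      ⟨S.A f, S.mem_domT f⟩) = S.A f := by
    exact LinearEquiv.ofInjective_symm_apply (f := (S.A : H →ₗ[ℂ] H))
      (h := S.A_injective) ⟨S.A f, S.mem_domT f⟩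
  have h2 := S.A_injective h1
  show (LinearEquiv.ofInjective (S.A : H →ₗ[ℂ] H) S.A_injective).symm
      ⟨S.A f, S.mem_domT f⟩ - S.RR (S.A f) = f - S.RR (S.A f)
  rw [h2]

lemma T_apply_mem (x : S.T.domain) : ∃ f : H, S.A f = (x : H) := x.2

lemma T_isFormalAdjoint_self : S.T.IsFormalAdjoint S.T := by
  rintro x y
  obtain ⟨f, hf⟩ := S.T_apply_mem x
  obtain ⟨g, hg⟩ := S.T_apply_mem y
  have hx : x = ⟨S.A f, S.mem_domT f⟩ := Subtype.ext hf.symm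
  have hy : y = ⟨S.A g, S.mem_domT g⟩ := Subtype.ext hg.symm
  rw [hx, hy, S.Tspec, S.Tspec]
  simp only [inner_sub_left, inner_sub_right]
  rw [S.RR_symm (S.A f) (S.A g), ← S.A_symm f g]

lemma T_le_adjoint : S.T ≤ LinearPMap.adjoint S.T :=
  LinearPMap.IsFormalAdjoint.le_adjoint S.T_domain_dense S.T_isFormalAdjoint_self

lemma adjoint_le_T : LinearPMap.adjoint S.T ≤ S.T := by
  have hFA := LinearPMap.adjoint_isFormalAdjoint (T := S.T) S.T_domain_dense
  have key : ∀ y : (LinearPMap.adjoint S.T).domain,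
      (y : H) = S.A ((LinearPMap.adjoint S.T) y + S.RR (y : H)) := by
    intro y
    have h2 : ∀ f : H,
        (⟪(y : H) - S.A ((LinearPMap.adjoint S.T) y) - S.A (S.RR (y : H)), f⟫ : ℂ) = 0 := by
      intro f
      have ha := hFA y ⟨S.A f, S.mem_domT f⟩
      rw [S.Tspec, inner_sub_right] at ha
      rw [← S.A_symm ((LinearPMap.adjoint S.T) y) f] at ha
      have hb : (⟪(y : H), S.RR (S.A f)⟫ : ℂ) = ⟪S.A (S.RR (y : H)), f⟫ := by
        rw [← S.RR_symm (y : H) (S.A f), ← S.A_symm (S.RR (y : H)) f]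
      rw [hb] at ha
      simp only [inner_sub_left]
      linear_combination -ha
    have h3 := h2 ((y : H) - S.A ((LinearPMap.adjoint S.T) y) - S.A (S.RR (y : H)))
    rw [inner_self_eq_zero] at h3
    rw [map_add]
    linear_combination (norm := module) h3
  constructor
  · intro y hy
    have := key ⟨y, hy⟩
    exact ⟨_, this.symm⟩
  · intro x u hxu
    obtain ⟨f, hf⟩ := S.T_apply_mem u
    have hu : u = ⟨S.A f, S.mem_domT f⟩ := Subtype.ext hf.symm
    have hx2 := key x
    have hAf : f = (LinearPMap.adjoint S.T) x + S.RR (x : H) := by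
      apply S.A_injective
      rw [hf, ← hxu]
      exact hx2
    have h5 : S.A f = (x : H) := by rw [hf, ← hxu]
    have h7 : S.T u = f - S.RR (S.A f) := by rw [hu]; exact S.Tspec f
    rw [h7, h5, hAf]
    module

lemma T_isSelfAdjoint : IsSelfAdjoint S.T :=
  LinearPMap.isSelfAdjoint_def.mpr (le_antisymm S.adjoint_le_T S.T_le_adjoint)

end FormOperator

section Representation

lemma exists_approx (v : S.V) :
    ∃ Φ : ℕ → ↥S.D, Tendsto (fun n => ((S.mkD (Φ n) : S.Dt) : S.V)) atTop (nhds v) := by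
  have hd : v ∈ closure (Set.range ((↑) : S.Dt → S.V)) :=
    UniformSpace.Completion.denseRange_coe v
  obtain ⟨f, hf_mem, hf_tendsto⟩ := mem_closure_iff_seq_limit.mp hd
  choose g hg using hf_mem
  refine ⟨fun n => S.unmk (g n), ?_⟩
  have heq : (fun n => ((S.mkD (S.unmk (g n)) : S.Dt) : S.V)) = f := funext hg
  rw [heq]
  exact hf_tendsto

lemma graphNormSq_sub (Φ Ψ : ↥S.D) :
    graphNormSq S.D S.q S.Pp S.Pm S.hPpD S.hPmD S.a S.b (Φ - Ψ) =
      ‖S.mkD Φ - S.mkD Ψ‖ ^ 2 := by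
  rw [S.graphNormSq_eq (Φ - Ψ)]
  rfl

lemma graphCauchy_of_cauchy {Φ : ℕ → ↥S.D} (h : CauchySeq (fun n => S.mkD (Φ n))) :
    IsGraphCauchy S.D S.q S.Pp S.Pm S.hPpD S.hPmD S.a S.b Φ := by
  intro ε hε
  rw [Metric.cauchySeq_iff] at h
  obtain ⟨N, hN⟩ := h (Real.sqrt ε) (Real.sqrt_pos.mpr hε)
  refine ⟨N, fun m hm n hn => ?_⟩
  have h1 := hN m hm n hn
  rw [dist_eq_norm] at h1
  rw [S.graphNormSq_sub]
  have h2 := norm_nonneg (S.mkD (Φ m) - S.mkD (Φ n))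
  have h3 : ‖S.mkD (Φ m) - S.mkD (Φ n)‖ ^ 2 < Real.sqrt ε ^ 2 := by nlinarith
  rwa [Real.sq_sqrt hε.le] at h3

lemma cauchy_of_graphCauchy {Φ : ℕ → ↥S.D}
    (h : IsGraphCauchy S.D S.q S.Pp S.Pm S.hPpD S.hPmD S.a S.b Φ) :
    CauchySeq (fun n => S.mkD (Φ n)) := by
  rw [Metric.cauchySeq_iff]
  intro ε hε
  obtain ⟨N, hN⟩ := h (ε ^ 2) (by positivity)
  refine ⟨N, fun m hm n hn => ?_⟩
  have h1 := hN m hm n hn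
  rw [S.graphNormSq_sub] at h1
  rw [dist_eq_norm]
  nlinarith [norm_nonneg (S.mkD (Φ m) - S.mkD (Φ n))]

/-- The representation property appearing in the final statement. -/
def Rep (L : H →ₗ.[ℂ] H) : Prop :=
  ∀ Ψ : L.domain, ∃ Φn : ℕ → ↥S.D,
    IsGraphCauchy S.D S.q S.Pp S.Pm S.hPpD S.hPmD S.a S.b Φn ∧
    Tendsto (fun n => (Φn n : H)) atTop (nhds (Ψ : H)) ∧
    ∀ Φ : ↥S.D,
      Tendsto (fun n => S.q Φ (Φn n)) atTop (nhds (⟪(Φ : H), L Ψ⟫ : ℂ))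

/-- `T` satisfies the representation property. -/
lemma T_rep : S.Rep S.T := by
  intro Ψ
  obtain ⟨f, hf⟩ := S.T_apply_mem Ψ
  set v : S.V := S.JV (S.G f) with hv
  have hiv : S.iota v = (Ψ : H) := by rw [hv, ← S.A_apply, hf]
  obtain ⟨Φ, hΦ⟩ := S.exists_approx v
  have hcau : CauchySeq (fun n => S.mkD (Φ n)) := S.cauchySeq_of_tendsto_V hΦ
  refine ⟨Φ, S.graphCauchy_of_cauchy hcau, ?_, ?_⟩
  · have h1 := (S.iota.continuous.tendsto v).comp hΦ
    rw [hiv] at h1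
    convert h1 using 2 with n
    exact (S.iota_coe (Φ n)).symm
  · intro Φ0
    have hTq : S.T Ψ = f - S.RR (S.A f) := by
      have hΨ : Ψ = ⟨S.A f, S.mem_domT f⟩ := Subtype.ext hf.symm
      rw [hΨ]; exact S.Tspec f
    have h2 : (⟪(Φ0 : H), S.T Ψ⟫ : ℂ) = S.Qbar ((S.mkD Φ0 : S.Dt) : S.V) v := by
      rw [hTq, hv, S.Qbar_JVG, S.iota_coe]
    rw [h2]
    have h3 := ((S.Qbar_continuous_right ((S.mkD Φ0 : S.Dt) : S.V)).tendsto v).comp hΦ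
    convert h3 using 2 with n
    exact (S.Qbar_coe Φ0 (Φ n)).symm

/-- Any operator with the representation property is represented by the closed form. -/
lemma rep_inner {L : H →ₗ.[ℂ] H} (hL : S.Rep L) (Ψ : L.domain) :
    ∃ v : S.V, S.iota v = (Ψ : H) ∧ ∀ u : S.V, (⟪S.iota u, L Ψ⟫ : ℂ) = S.Qbar u v := by
  obtain ⟨Φn, hcauchy, htend, hform⟩ := hL Ψ
  have hcau : CauchySeq (fun n => ((S.mkD (Φn n) : S.Dt) : S.V)) := by
    have h1 := S.cauchy_of_graphCauchy hcauchy
    exact ((UniformSpace.Completion.isUniformInducing_coe S.Dt).uniformContinuous.comp_cauchySeq h1)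
  obtain ⟨v, hvlim⟩ := cauchySeq_tendsto_of_complete hcau
  have hiv : S.iota v = (Ψ : H) := by
    have h1 := (S.iota.continuous.tendsto v).comp hvlim
    have h1' : Tendsto (fun n => ((Φn n : ↥S.D) : H)) atTop (nhds (S.iota v)) := by
      convert h1 using 2 with n
      exact (S.iota_coe (Φn n)).symm
    exact tendsto_nhds_unique h1' htend
  refine ⟨v, hiv, ?_⟩
  have hcoe : ∀ Φ : ↥S.D, (⟪S.iota ((S.mkD Φ : S.Dt) : S.V), L Ψ⟫ : ℂ) =
      S.Qbar ((S.mkD Φ : S.Dt) : S.V) v := by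
    intro Φ
    have h1 := ((S.Qbar_continuous_right ((S.mkD Φ : S.Dt) : S.V)).tendsto v).comp hvlim
    have h2 : (fun n => S.Qbar ((S.mkD Φ : S.Dt) : S.V) ((S.mkD (Φn n) : S.Dt) : S.V)) =
        fun n => S.q Φ (Φn n) := by
      funext n; exact S.Qbar_coe Φ (Φn n)
    rw [Function.comp_def, h2] at h1
    have h3 := hform Φ
    rw [S.iota_coe]
    exact tendsto_nhds_unique h3 h1
  -- extend to all `u` by density
  have hfun : (fun u : S.V => (⟪S.iota u, L Ψ⟫ : ℂ)) = fun u => S.Qbar u v := by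
    refine UniformSpace.Completion.denseRange_coe.equalizer ?_ (S.Qbar_continuous_left v) ?_
    · exact Continuous.inner (S.iota.continuous.comp continuous_id) continuous_const
    · funext x
      exact hcoe (S.unmk x)
  exact fun u => congrFun hfun u

/-- Two self-adjoint operators with the representation property are formal adjoints. -/
lemma rep_formalAdjoint {L1 L2 : H →ₗ.[ℂ] H} (h1 : S.Rep L1) (h2 : S.Rep L2) :
    L1.IsFormalAdjoint L2 := by
  intro x y
  obtain ⟨vx, hvx, hx⟩ := S.rep_inner h1 x
  obtain ⟨vy, hvy, hy⟩ := S.rep_inner h2 y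
  calc (⟪L1 x, (y : H)⟫ : ℂ)
      = (starRingEnd ℂ) (⟪(y : H), L1 x⟫ : ℂ) := (inner_conj_symm _ _).symm
    _ = (starRingEnd ℂ) (⟪S.iota vy, L1 x⟫ : ℂ) := by rw [hvy]
    _ = (starRingEnd ℂ) (S.Qbar vy vx) := by rw [hx vy]
    _ = S.Qbar vx vy := S.Qbar_herm vx vy
    _ = (⟪S.iota vx, L2 y⟫ : ℂ) := (hy vx).symm
    _ = ⟪(x : H), L2 y⟫ := by rw [hvx]

/-- Existence and uniqueness of the representing self-adjoint operator. -/
theorem main : ∃! T : H →ₗ.[ℂ] H, IsSelfAdjoint T ∧ S.Rep T := by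
  refine ⟨S.T, ⟨S.T_isSelfAdjoint, S.T_rep⟩, ?_⟩
  rintro L ⟨hLsa, hLrep⟩
  have h1 : L.IsFormalAdjoint S.T := S.rep_formalAdjoint hLrep S.T_rep
  have h2 : S.T.IsFormalAdjoint L := S.rep_formalAdjoint S.T_rep hLrep
  have hLdense : Dense (L.domain : Set H) := hLsa.dense_domain
  have le1 : S.T ≤ LinearPMap.adjoint L :=
    LinearPMap.IsFormalAdjoint.le_adjoint hLdense h1
  have le2 : L ≤ LinearPMap.adjoint S.T :=
    LinearPMap.IsFormalAdjoint.le_adjoint S.T_domain_dense h2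
  rw [LinearPMap.isSelfAdjoint_def.mp hLsa] at le1
  rw [LinearPMap.isSelfAdjoint_def.mp S.T_isSelfAdjoint] at le2
  exact le_antisymm le2 le1

end Representation

end POASetup

/-- **Representation theorem for non-semibounded, partially orthogonally additive forms.**
Let `H = W₊ ⊕ W₋` be an orthogonal decomposition (orthogonal projections `P₊, P₋`) and let `Q`
be a Hermitean quadratic form on a dense domain `𝓓`, partially orthogonally additive with
respect to the decomposition, whose sector `Q₊` is semibounded from below and closable and whose
sector `Q₋` is semibounded from above and closable.  Then there is a unique self-adjoint
operator `T` whose domain is contained in the closure `𝓓̄` of `𝓓` for the graph norm, such that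
`Q̄(Φ,Ψ) = ⟨Φ, TΨ⟩` for all `Φ` in the closure of the form domain and `Ψ ∈ D(T)` (expressed via
graph-norm approximation of `Ψ` by elements of `𝓓`). -/
theorem stmt_8 (D : Submodule ℂ H) (hD : Dense (D : Set H))
    (q : ↥D → ↥D → ℂ)
    (hherm : ∀ x y : ↥D, q x y = (starRingEnd ℂ) (q y x))
    (haddl : ∀ x y z : ↥D, q (x + y) z = q x z + q y z)
    (haddr : ∀ x y z : ↥D, q x (y + z) = q x y + q x z)
    (hsmulr : ∀ (c : ℂ) (x y : ↥D), q x (c • y) = c * q x y)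
    (Pp Pm : H →L[ℂ] H)
    (hsum : Pp + Pm = 1) (hPp2 : Pp * Pp = Pp) (hPm2 : Pm * Pm = Pm)
    (hPpsa : IsSelfAdjoint Pp) (hPmsa : IsSelfAdjoint Pm) (hPpPm : Pp * Pm = 0)
    (hPpD : ∀ x ∈ D, Pp x ∈ D) (hPmD : ∀ x ∈ D, Pm x ∈ D)
    (hPOA : ∀ Φ Ψ : ↥D, ⟪Pp (Φ : H), Pp (Ψ : H)⟫ = (0 : ℂ) →
      ⟪Pm (Φ : H), Pm (Ψ : H)⟫ = (0 : ℂ) →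
      q (Φ + Ψ) (Φ + Ψ) = q Φ Φ + q Ψ Ψ)
    (a b : ℝ) (ha : 0 < a) (hb : 0 < b)
    (hlow : ∀ Φ : ↥D, -a * ‖Pp (Φ : H)‖ ^ 2 ≤ (sectorDiag D q Pp hPpD Φ).re)
    (hup : ∀ Φ : ↥D, (sectorDiag D q Pm hPmD Φ).re ≤ b * ‖Pm (Φ : H)‖ ^ 2)
    (hclosp : ∀ Φ : ℕ → ↥D,
      (∀ ε > 0, ∃ N : ℕ, ∀ m ≥ N, ∀ n ≥ N,
        (1 + a) * ‖Pp ((Φ m : H) - (Φ n : H))‖ ^ 2 +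
          (sectorDiag D q Pp hPpD (Φ m - Φ n)).re < ε) →
      Tendsto (fun n => Pp (Φ n : H)) atTop (nhds 0) →
      Tendsto (fun n => (sectorDiag D q Pp hPpD (Φ n)).re) atTop (nhds 0))
    (hclosm : ∀ Φ : ℕ → ↥D,
      (∀ ε > 0, ∃ N : ℕ, ∀ m ≥ N, ∀ n ≥ N,
        (1 + b) * ‖Pm ((Φ m : H) - (Φ n : H))‖ ^ 2 -
          (sectorDiag D q Pm hPmD (Φ m - Φ n)).re < ε) →
      Tendsto (fun n => Pm (Φ n : H)) atTop (nhds 0) →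
      Tendsto (fun n => (sectorDiag D q Pm hPmD (Φ n)).re) atTop (nhds 0)) :
    ∃! T : H →ₗ.[ℂ] H, IsSelfAdjoint T ∧
      (∀ Ψ : T.domain, ∃ Φn : ℕ → ↥D,
        IsGraphCauchy D q Pp Pm hPpD hPmD a b Φn ∧
        Tendsto (fun n => (Φn n : H)) atTop (nhds (Ψ : H)) ∧
        ∀ Φ : ↥D,
          Tendsto (fun n => q Φ (Φn n)) atTop (nhds (⟪(Φ : H), T Ψ⟫ : ℂ))) := by
  exact POASetup.main ⟨D, q, Pp, Pm, a, b, hD, hherm, haddl, haddr, hsmulr, hsum, hPp2, hPm2,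
    hPpsa, hPmsa, hPpPm, hPpD, hPmD, hPOA, hlow, hup, hclosp, hclosm⟩
end

section
/- Let $Q$ be a closed semibounded quadratic form with dense domain $\mathcal{D}$, represented by the self-adjoint operator $T$ via Kato's theorem. Let $V$ be a unitary representation of a group $G$. Then $Q$ is $G$-invariant (i.e., $V(g)\mathcal{D} \subset \mathcal{D}$ and $Q(V(g)\Phi, V(g)\Psi) = Q(\Phi,\Psi)$ for all $\Phi,\Psi \in \mathcal{D}$) if and only if $T$ is $G$-invariant (i.e., $V(g)\mathcal{D}(T) \subset \mathcal{D}(T)$ and $V(g)T = TV(g)$ on $\mathcal{D}(T)$). -/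
open ComplexInnerProductSpace

set_option linter.unusedSectionVars false

namespace Stmt14Aux

variable {E : Type*} [AddCommGroup E] [Module ℂ E] {p : E → E → ℂ}

section basic
variable (hsym : ∀ x y, p x y = (starRingEnd ℂ) (p y x))
  (haddl : ∀ x y z, p (x + y) z = p x z + p y z)
  (haddr : ∀ x y z, p x (y + z) = p x y + p x z)
  (hsmulr : ∀ (c : ℂ) (x y : E), p x (c • y) = c * p x y)

include haddr in
theorem p_zero_r (x : E) : p x 0 = 0 := by
  have := haddr x 0 0
  simpa using this.symm

include hsym haddr in
theorem p_zero_l (y : E) : p 0 y = 0 := by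
  rw [hsym, p_zero_r haddr, map_zero]

include hsmulr in
theorem p_neg_r (x y : E) : p x (-y) = - p x y := by
  have := hsmulr (-1) x y
  simpa using this

include hsym hsmulr in
theorem p_neg_l (x y : E) : p (-x) y = - p x y := by
  rw [hsym, p_neg_r hsmulr, map_neg, ← hsym]

include haddr hsmulr in
theorem p_sub_r (x y z : E) : p x (y - z) = p x y - p x z := by
  rw [sub_eq_add_neg, haddr, p_neg_r hsmulr, sub_eq_add_neg]

include hsym haddl hsmulr in
theorem p_sub_l (x y z : E) : p (x - y) z = p x z - p y z := by
  rw [sub_eq_add_neg, haddl, p_neg_l hsym hsmulr, sub_eq_add_neg]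

include hsym hsmulr in
theorem p_smul_l (c : ℂ) (x y : E) : p (c • x) y = (starRingEnd ℂ) c * p x y := by
  rw [hsym, hsmulr, map_mul, ← hsym]

include hsym in
theorem p_diag_real (x : E) : ((p x x).re : ℂ) = p x x := by
  rw [← Complex.conj_eq_iff_re, ← hsym]

include hsym haddl haddr hsmulr in
/-- Cauchy-Schwarz for a nonnegative hermitian sesquilinear form. -/
theorem p_cauchy_schwarz (hpos : ∀ x, 0 ≤ (p x x).re) (x y : E) :
    ‖p x y‖ ^ 2 ≤ (p x x).re * (p y y).re := by
  by_cases hxy : p x y = 0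
  · simp only [hxy, norm_zero]
    have := hpos x; have := hpos y
    nlinarith
  · set c : ℂ := ‖p x y‖ / p x y with hc
    have hcnorm : ‖c‖ = 1 := by
      rw [hc, norm_div, Complex.norm_real, Real.norm_of_nonneg (norm_nonneg _),
        div_self (norm_ne_zero_iff.mpr hxy)]
    set y' : E := c • y with hy'
    have h1 : p x y' = (‖p x y‖ : ℂ) := by
      rw [hy', hsmulr, hc, div_mul_cancel₀ _ hxy]
    have hcc : c * (starRingEnd ℂ) c = 1 := by
      rw [Complex.mul_conj]
      norm_cast
      rw [Complex.normSq_eq_norm_sq, hcnorm]; norm_num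
    have h2 : p y' y' = p y y := by
      rw [hy', hsmulr, p_smul_l hsym hsmulr, ← mul_assoc, hcc, one_mul]
    have h3 : p y' x = (‖p x y‖ : ℂ) := by
      rw [hsym, h1, Complex.conj_ofReal]
    clear_value y'
    clear hy'
    have key : ∀ t : ℝ, 0 ≤ (p y y).re * (t * t) + (2 * ‖p x y‖) * t + (p x x).re := by
      intro t
      have h0 := hpos (x + (t : ℂ) • y')
      have hexp : p (x + (t : ℂ) • y') (x + (t : ℂ) • y')
          = p x x + (t : ℂ) * (‖p x y‖ : ℂ) + (t : ℂ) * (‖p x y‖ : ℂ)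
            + (t : ℂ) * ((t : ℂ) * p y y) := by
        rw [haddl, haddr, haddr, hsmulr, hsmulr, p_smul_l hsym hsmulr,
          p_smul_l hsym hsmulr, h1, h2, h3, Complex.conj_ofReal]
        ring
      rw [hexp] at h0
      simp only [Complex.add_re, Complex.re_ofReal_mul, Complex.ofReal_re] at h0
      nlinarith
    have hd := discrim_le_zero key
    rw [discrim] at hd
    nlinarith [norm_nonneg (p x y)]

include hsym haddl haddr hsmulr in
theorem p_parallelogram (u v : E) :
    (p (u + v) (u + v)).re + (p (u - v) (u - v)).re
      = 2 * (p u u).re + 2 * (p v v).re := by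
  have h1 : p (u + v) (u + v) + p (u - v) (u - v) = 2 * p u u + 2 * p v v := by
    rw [haddl, haddr, haddr, p_sub_l hsym haddl hsmulr, p_sub_r haddr hsmulr,
      p_sub_r haddr hsmulr]
    ring
  have := congrArg Complex.re h1
  simpa using this

include hsym haddl haddr hsmulr in
/-- Polarization identity. -/
theorem p_polarization (x y : E) :
    p x y = (p (x + y) (x + y) - p (x - y) (x - y)
      - Complex.I * p (x + Complex.I • y) (x + Complex.I • y)
      + Complex.I * p (x - Complex.I • y) (x - Complex.I • y)) / 4 := by
  have e1 : p (x + y) (x + y) = p x x + p x y + p y x + p y y := by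
    rw [haddl, haddr, haddr]; ring
  have e2 : p (x - y) (x - y) = p x x - p x y - p y x + p y y := by
    rw [p_sub_l hsym haddl hsmulr, p_sub_r haddr hsmulr, p_sub_r haddr hsmulr]; ring
  have e3 : p (x + Complex.I • y) (x + Complex.I • y)
      = p x x + Complex.I * p x y - Complex.I * p y x + p y y := by
    rw [haddl, haddr, haddr, hsmulr, p_smul_l hsym hsmulr, hsmulr, p_smul_l hsym hsmulr]
    simp only [Complex.conj_I]
    ring_nf
    rw [Complex.I_sq]
    ring
  have e4 : p (x - Complex.I • y) (x - Complex.I • y)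
      = p x x - Complex.I * p x y + Complex.I * p y x + p y y := by
    rw [p_sub_l hsym haddl hsmulr, p_sub_r haddr hsmulr, p_sub_r haddr hsmulr,
      hsmulr, p_smul_l hsym hsmulr, hsmulr, p_smul_l hsym hsmulr]
    simp only [Complex.conj_I]
    ring_nf
    rw [Complex.I_sq]
    ring
  rw [e1, e2, e3, e4]
  linear_combination (p x y - p y x) / 2 * Complex.I_sq

include hsym haddl haddr hsmulr in
/-- The diagonal of the form is continuous along form-convergent sequences. -/
theorem p_diag_tendsto (hpos : ∀ x, 0 ≤ (p x x).re) (u : E) (v : ℕ → E)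
    (h : Filter.Tendsto (fun n => (p (v n - u) (v n - u)).re) Filter.atTop (nhds 0)) :
    Filter.Tendsto (fun n => (p (v n) (v n)).re) Filter.atTop (nhds ((p u u).re)) := by
  have hexp : ∀ n, (p (v n) (v n)).re
      = (p u u).re + (2 * (p u (v n - u)).re + (p (v n - u) (v n - u)).re) := by
    intro n
    have h4 : p (v n) (v n)
        = p u u + p u (v n - u) + p (v n - u) u + p (v n - u) (v n - u) := by
      have hvn : v n = u + (v n - u) := by abel
      nth_rewrite 1 [hvn]; nth_rewrite 2 [hvn]
      rw [haddl, haddr, haddr]; ring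
    have h5 : (p (v n - u) u).re = (p u (v n - u)).re := by
      rw [hsym]; exact Complex.conj_re _
    have := congrArg Complex.re h4
    simp only [Complex.add_re] at this
    rw [this, h5]; ring
  have hmid : Filter.Tendsto (fun n => 2 * (p u (v n - u)).re) Filter.atTop (nhds 0) := by
    apply squeeze_zero_norm (a := fun n => 2 * Real.sqrt ((p u u).re * (p (v n - u) (v n - u)).re))
    · intro n
      have hcs := p_cauchy_schwarz hsym haddl haddr hsmulr hpos u (v n - u)
      have h6 : ‖p u (v n - u)‖ ≤ Real.sqrt ((p u u).re * (p (v n - u) (v n - u)).re) := by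
        rw [← Real.sqrt_sq (norm_nonneg (p u (v n - u)))]
        exact Real.sqrt_le_sqrt hcs
      have h7 : |(p u (v n - u)).re| ≤ ‖p u (v n - u)‖ := Complex.abs_re_le_norm _
      rw [Real.norm_eq_abs, abs_mul, abs_two]
      nlinarith [Real.sqrt_nonneg ((p u u).re * (p (v n - u) (v n - u)).re)]
    · have h8 : Filter.Tendsto (fun n => (p u u).re * (p (v n - u) (v n - u)).re)
          Filter.atTop (nhds 0) := by
        simpa using h.const_mul ((p u u).re)
      have h9 := (Real.continuous_sqrt.tendsto 0).comp h8
      simp only [Function.comp_def, Real.sqrt_zero] at h9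
      simpa using h9.const_mul 2
  have := (hmid.add h).const_add ((p u u).re)
  simp only [add_zero] at this
  exact this.congr (fun n => (hexp n).symm)

end basic

theorem pmap_val_congr {𝕜 E F : Type*} [Ring 𝕜] [AddCommGroup E] [Module 𝕜 E]
    [AddCommGroup F] [Module 𝕜 F] {S R : E →ₗ.[𝕜] F} (h : S = R) {x : E}
    (hxS : x ∈ S.domain) (hxR : x ∈ R.domain) : S ⟨x, hxS⟩ = R ⟨x, hxR⟩ := by
  subst h; rfl

end Stmt14Aux

open Stmt14Aux in
/-- Let `Q` be a closed, lower semibounded Hermitean quadratic form with dense domain `𝓓`,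
represented (Kato) by the self-adjoint operator `T`, with `D(T) ⊆ 𝓓` dense in `𝓓` for the graph
norm.  For a unitary representation `V` of a group `G`, the form `Q` is `G`-invariant if and
only if the operator `T` is `G`-invariant. -/
theorem stmt_14 {H : Type*} [NormedAddCommGroup H] [InnerProductSpace ℂ H] [CompleteSpace H]
    {G : Type*} [Group G] (V : G →* (H ≃ₗᵢ[ℂ] H))
    (D : Submodule ℂ H) (hD : Dense (D : Set H))
    (q : ↥D → ↥D → ℂ)
    (hherm : ∀ x y : ↥D, q x y = (starRingEnd ℂ) (q y x))
    (haddl : ∀ x y z : ↥D, q (x + y) z = q x z + q y z)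
    (haddr : ∀ x y z : ↥D, q x (y + z) = q x y + q x z)
    (hsmulr : ∀ (c : ℂ) (x y : ↥D), q x (c • y) = c * q x y)
    (a : ℝ) (ha : 0 < a)
    (hbound : ∀ x : ↥D, -a * ‖(x : H)‖ ^ 2 ≤ (q x x).re)
    (hclosed : ∀ (Φ : ℕ → ↥D) (x : H),
      (∀ ε > 0, ∃ N : ℕ, ∀ m ≥ N, ∀ n ≥ N,
        (1 + a) * ‖(Φ m : H) - (Φ n : H)‖ ^ 2 + (q (Φ m - Φ n) (Φ m - Φ n)).re < ε) →
      Filter.Tendsto (fun n => (Φ n : H)) Filter.atTop (nhds x) →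
      ∃ hx : x ∈ D, Filter.Tendsto
        (fun n => (1 + a) * ‖(Φ n : H) - x‖ ^ 2
          + (q (Φ n - ⟨x, hx⟩) (Φ n - ⟨x, hx⟩)).re) Filter.atTop (nhds 0))
    (T : H →ₗ.[ℂ] H) (hTsa : IsSelfAdjoint T)
    (hTD : ∀ x : H, x ∈ T.domain → x ∈ D)
    (hrep : ∀ (Φ : ↥D) (Ψ : T.domain),
      q Φ ⟨(Ψ : H), hTD _ Ψ.2⟩ = ⟪(Φ : H), T Ψ⟫)
    (hgdense : ∀ (Φ : ↥D), ∀ ε > 0, ∃ Ψ : T.domain,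
      (1 + a) * ‖(Φ : H) - (Ψ : H)‖ ^ 2
        + (q (Φ - ⟨(Ψ : H), hTD _ Ψ.2⟩) (Φ - ⟨(Ψ : H), hTD _ Ψ.2⟩)).re < ε) :
    (∀ g : G, (∀ x ∈ D, V g x ∈ D) ∧
      ∀ (Φ Ψ : ↥D) (hΦ : V g (Φ : H) ∈ D) (hΨ : V g (Ψ : H) ∈ D),
        q ⟨V g (Φ : H), hΦ⟩ ⟨V g (Ψ : H), hΨ⟩ = q Φ Ψ) ↔
    (∀ g : G, (∀ x ∈ T.domain, V g x ∈ T.domain) ∧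
      ∀ (Ψ : T.domain) (h' : V g (Ψ : H) ∈ T.domain),
        T ⟨V g (Ψ : H), h'⟩ = V g (T Ψ)) := by
  have hVV : ∀ (g : G) (x : H), V g (V g⁻¹ x) = x := by
    intro g x
    have h1 : V g * V g⁻¹ = 1 := by rw [← map_mul, mul_inv_cancel, map_one]
    have h2 := congrFun (congrArg (fun (e : H ≃ₗᵢ[ℂ] H) => ⇑e) h1) x
    simpa [LinearIsometryEquiv.coe_mul] using h2
  have hVinner : ∀ (g : G) (x y : H), ⟪V g x, V g y⟫ = ⟪x, y⟫ := fun g x y =>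
    (V g).inner_map_map x y
  constructor
  · -- form invariance implies operator invariance
    intro hQ g
    have hden : Dense (T.domain : Set H) := hTsa.dense_domain
    have hTT : T.adjoint = T := LinearPMap.isSelfAdjoint_def.mp hTsa
    have key : ∀ (Ψ : T.domain) (Φ : T.domain),
        ⟪V g (T Ψ), (Φ : H)⟫ = ⟪V g (Ψ : H), T Φ⟫ := by
      intro Ψ Φ
      have hΨD : (Ψ : H) ∈ D := hTD _ Ψ.2
      have hVΨD : V g (Ψ : H) ∈ D := (hQ g).1 _ hΨD
      have hΦD : (Φ : H) ∈ D := hTD _ Φ.2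
      have huD : V g⁻¹ (Φ : H) ∈ D := (hQ g⁻¹).1 _ hΦD
      have hVu : V g (V g⁻¹ (Φ : H)) = (Φ : H) := hVV g _
      have hVuD : V g (V g⁻¹ (Φ : H)) ∈ D := by rw [hVu]; exact hΦD
      have s1 : q ⟨V g (Ψ : H), hVΨD⟩ ⟨(Φ : H), hTD _ Φ.2⟩ = ⟪V g (Ψ : H), T Φ⟫ :=
        hrep _ Φ
      have s2 := (hQ g).2 ⟨(Ψ : H), hΨD⟩ ⟨V g⁻¹ (Φ : H), huD⟩ ((hQ g).1 _ hΨD) hVuD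
      have s4 : q ⟨V g⁻¹ (Φ : H), huD⟩ ⟨(Ψ : H), hTD _ Ψ.2⟩ = ⟪V g⁻¹ (Φ : H), T Ψ⟫ :=
        hrep _ Ψ
      have hsub : (⟨V g (V g⁻¹ (Φ : H)), hVuD⟩ : ↥D) = ⟨(Φ : H), hTD _ Φ.2⟩ :=
        Subtype.ext hVu
      calc ⟪V g (T Ψ), (Φ : H)⟫ = ⟪V g (T Ψ), V g (V g⁻¹ (Φ : H))⟫ := by rw [hVu]
        _ = ⟪(T Ψ : H), V g⁻¹ (Φ : H)⟫ := hVinner g _ _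
        _ = (starRingEnd ℂ) ⟪V g⁻¹ (Φ : H), (T Ψ : H)⟫ := (inner_conj_symm _ _).symm
        _ = (starRingEnd ℂ) (q ⟨V g⁻¹ (Φ : H), huD⟩ ⟨(Ψ : H), hTD _ Ψ.2⟩) := by rw [s4]
        _ = q ⟨(Ψ : H), hΨD⟩ ⟨V g⁻¹ (Φ : H), huD⟩ := (hherm _ _).symm
        _ = q ⟨V g (Ψ : H), hVΨD⟩ ⟨V g (V g⁻¹ (Φ : H)), hVuD⟩ := s2.symm
        _ = q ⟨V g (Ψ : H), hVΨD⟩ ⟨(Φ : H), hTD _ Φ.2⟩ := by rw [hsub]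
        _ = ⟪V g (Ψ : H), T Φ⟫ := s1
    have hmemT : ∀ x ∈ T.domain, V g x ∈ T.domain := by
      intro x hx
      have h1 : V g x ∈ T.adjoint.domain :=
        LinearPMap.mem_adjoint_domain_of_exists _
          ⟨V g (T ⟨x, hx⟩), fun Φ => key ⟨x, hx⟩ Φ⟩
      rwa [hTT] at h1
    refine ⟨hmemT, fun Ψ h' => ?_⟩
    have h1 : V g (Ψ : H) ∈ T.adjoint.domain :=
      LinearPMap.mem_adjoint_domain_of_exists _ ⟨V g (T Ψ), fun Φ => key Ψ Φ⟩
    have h2 : T.adjoint ⟨V g (Ψ : H), h1⟩ = V g (T Ψ) :=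
      LinearPMap.adjoint_apply_eq hden _ (fun Φ => key Ψ Φ)
    rw [← pmap_val_congr hTT h1 h', h2]
  · -- operator invariance implies form invariance
    intro hT g
    -- the auxiliary nonnegative hermitian form
    set p : ↥D → ↥D → ℂ := fun x y => ((1 + a : ℝ) : ℂ) * ⟪(x : H), (y : H)⟫ + q x y with hp
    have psym : ∀ x y : ↥D, p x y = (starRingEnd ℂ) (p y x) := by
      intro x y
      simp only [hp, map_add, map_mul, Complex.conj_ofReal, inner_conj_symm, ← hherm]
    have paddl : ∀ x y z : ↥D, p (x + y) z = p x z + p y z := by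
      intro x y z
      simp only [hp, Submodule.coe_add, inner_add_left, haddl]; ring
    have paddr : ∀ x y z : ↥D, p x (y + z) = p x y + p x z := by
      intro x y z
      simp only [hp, Submodule.coe_add, inner_add_right, haddr]; ring
    have psmulr : ∀ (c : ℂ) (x y : ↥D), p x (c • y) = c * p x y := by
      intro c x y
      simp only [hp, Submodule.coe_smul, inner_smul_right, hsmulr]; ring
    have pre : ∀ x : ↥D, (p x x).re = (1 + a) * ‖(x : H)‖ ^ 2 + (q x x).re := by
      intro x
      simp only [hp, Complex.add_re, Complex.re_ofReal_mul, inner_self_eq_norm_sq_to_K]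
      norm_cast
    have pge : ∀ x : ↥D, ‖(x : H)‖ ^ 2 ≤ (p x x).re := by
      intro x; rw [pre]; have := hbound x; nlinarith [sq_nonneg ‖(x : H)‖]
    have ppos : ∀ x : ↥D, 0 ≤ (p x x).re := fun x => le_trans (by positivity) (pge x)
    have preq : ∀ x y : ↥D, (p (x - y) (x - y)).re
        = (1 + a) * ‖(x : H) - (y : H)‖ ^ 2 + (q (x - y) (x - y)).re := by
      intro x y; rw [pre]; simp
    -- diagonal invariance on the operator domain
    have hdiagT : ∀ (z : H) (hz : z ∈ T.domain) (h2 : V g z ∈ D),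
        q ⟨V g z, h2⟩ ⟨V g z, h2⟩ = q ⟨z, hTD z hz⟩ ⟨z, hTD z hz⟩ := by
      intro z hz h2
      have hz' : V g z ∈ T.domain := (hT g).1 z hz
      have e1 : q ⟨V g z, h2⟩ ⟨V g z, h2⟩ = ⟪V g z, T ⟨V g z, hz'⟩⟫ :=
        hrep ⟨V g z, h2⟩ ⟨V g z, hz'⟩
      have e2 : T ⟨V g z, hz'⟩ = V g (T ⟨z, hz⟩) := (hT g).2 ⟨z, hz⟩ hz'
      have e3 : q ⟨z, hTD z hz⟩ ⟨z, hTD z hz⟩ = ⟪z, T ⟨z, hz⟩⟫ := hrep _ ⟨z, hz⟩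
      rw [e1, e2, e3, hVinner g]
    have hpdiagT : ∀ (z : H) (hz : z ∈ T.domain) (h2 : V g z ∈ D),
        (p ⟨V g z, h2⟩ ⟨V g z, h2⟩).re = (p ⟨z, hTD z hz⟩ ⟨z, hTD z hz⟩).re := by
      intro z hz h2
      rw [pre, pre, hdiagT z hz h2]
      simp [(V g).norm_map]
    -- the main step: membership and diagonal invariance on all of D
    have hmemdiag : ∀ x : ↥D, ∃ h : V g (x : H) ∈ D,
        q ⟨V g (x : H), h⟩ ⟨V g (x : H), h⟩ = q x x := by
      intro x
      have hseq : ∀ n : ℕ, ∃ Ψ : T.domain,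
          (p (x - ⟨(Ψ : H), hTD _ Ψ.2⟩) (x - ⟨(Ψ : H), hTD _ Ψ.2⟩)).re
            < 1 / ((n : ℝ) + 1) := by
        intro n
        obtain ⟨Ψ, hΨ⟩ := hgdense x (1 / ((n : ℝ) + 1)) (by positivity)
        exact ⟨Ψ, by rw [preq]; exact hΨ⟩
      choose Ψs hΨs using hseq
      set Ψh : ℕ → ↥D := fun n => ⟨(Ψs n : H), hTD _ (Ψs n).2⟩ with hΨh
      set Φs : ℕ → ↥D := fun n => ⟨V g (Ψs n : H), hTD _ ((hT g).1 _ (Ψs n).2)⟩ with hΦs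
      have hΨs' : ∀ n : ℕ, (p (x - Ψh n) (x - Ψh n)).re < 1 / ((n : ℝ) + 1) :=
        fun n => hΨs n
      have hΦsub : ∀ m n : ℕ, ((Φs m - Φs n : ↥D) : H)
          = V g ((Ψs m : H) - (Ψs n : H)) := by
        intro m n; simp [hΦs, map_sub]
      -- Cauchy property in the form norm
      have hcau : ∀ ε > 0, ∃ N : ℕ, ∀ m ≥ N, ∀ n ≥ N,
          (1 + a) * ‖(Φs m : H) - (Φs n : H)‖ ^ 2
            + (q (Φs m - Φs n) (Φs m - Φs n)).re < ε := by
        intro ε hε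
        obtain ⟨N, hN⟩ := exists_nat_gt (4 / ε)
        refine ⟨N, fun m hm n hn => ?_⟩
        have hzmem : (Ψs m : H) - (Ψs n : H) ∈ T.domain := sub_mem (Ψs m).2 (Ψs n).2
        have h2 : V g ((Ψs m : H) - (Ψs n : H)) ∈ D := by
          rw [← hΦsub m n]; exact (Φs m - Φs n).2
        have hq1 : q (Φs m - Φs n) (Φs m - Φs n) = q (Ψh m - Ψh n) (Ψh m - Ψh n) := by
          have e1 : (Φs m - Φs n : ↥D) = ⟨V g ((Ψs m : H) - (Ψs n : H)), h2⟩ :=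
            Subtype.ext (hΦsub m n)
          have e2 : (Ψh m - Ψh n : ↥D) = ⟨(Ψs m : H) - (Ψs n : H), hTD _ hzmem⟩ :=
            Subtype.ext (by simp [hΨh])
          rw [e1, e2]; exact hdiagT _ hzmem h2
        have hnorm1 : ‖(Φs m : H) - (Φs n : H)‖ = ‖(Ψh m : H) - (Ψh n : H)‖ := by
          have : (Φs m : H) - (Φs n : H) = V g ((Ψs m : H) - (Ψs n : H)) := by
            simpa using hΦsub m n
          rw [this, (V g).norm_map]
        have hmain : (1 + a) * ‖(Φs m : H) - (Φs n : H)‖ ^ 2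
            + (q (Φs m - Φs n) (Φs m - Φs n)).re
            = (p (Ψh m - Ψh n) (Ψh m - Ψh n)).re := by
          rw [preq, hq1, hnorm1]
        rw [hmain]
        have hpar := p_parallelogram psym paddl paddr psmulr (x - Ψh n) (x - Ψh m)
        have hsum : (x - Ψh n) - (x - Ψh m) = Ψh m - Ψh n := by abel
        rw [hsum] at hpar
        have h5 := ppos ((x - Ψh n) + (x - Ψh m))
        have h6 := hΨs' m
        have h7 := hΨs' n
        have h8 : 1 / ((m : ℝ) + 1) ≤ 1 / ((N : ℝ) + 1) := by
          apply one_div_le_one_div_of_le (by positivity)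
          have : (N : ℝ) ≤ (m : ℝ) := by exact_mod_cast hm
          linarith
        have h9 : 1 / ((n : ℝ) + 1) ≤ 1 / ((N : ℝ) + 1) := by
          apply one_div_le_one_div_of_le (by positivity)
          have : (N : ℝ) ≤ (n : ℝ) := by exact_mod_cast hn
          linarith
        have h10 : 4 / ((N : ℝ) + 1) < ε := by
          rw [div_lt_iff₀ (by positivity)]
          have h11 : 4 / ε < (N : ℝ) + 1 := lt_trans hN (lt_add_one _)
          rw [div_lt_iff₀ hε] at h11
          linarith
        have h12 : 4 / ((N : ℝ) + 1) = 2 * (1 / ((N : ℝ) + 1)) + 2 * (1 / ((N : ℝ) + 1)) := by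
          ring
        linarith
      -- convergence in H
      have hconv : Filter.Tendsto (fun n => ((Φs n : ↥D) : H)) Filter.atTop
          (nhds (V g (x : H))) := by
        rw [tendsto_iff_norm_sub_tendsto_zero]
        apply squeeze_zero (g := fun n : ℕ => Real.sqrt (1 / ((n : ℝ) + 1)))
          (fun n => norm_nonneg _)
        · intro n
          have hv : ((Φs n : ↥D) : H) - V g (x : H) = V g ((Ψs n : H) - (x : H)) := by
            simp [hΦs, map_sub]
          rw [hv, (V g).norm_map, ← norm_neg, neg_sub]
          apply Real.le_sqrt_of_sq_le
          calc ‖(x : H) - (Ψs n : H)‖ ^ 2 = ‖((x - Ψh n : ↥D) : H)‖ ^ 2 := by simp [hΨh]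
            _ ≤ (p (x - Ψh n) (x - Ψh n)).re := pge _
            _ ≤ 1 / ((n : ℝ) + 1) := le_of_lt (hΨs' n)
        · have h13 : Filter.Tendsto (fun n : ℕ => 1 / ((n : ℝ) + 1)) Filter.atTop (nhds 0) :=
            tendsto_one_div_add_atTop_nhds_zero_nat
          have h14 := (Real.continuous_sqrt.tendsto 0).comp h13
          simpa [Function.comp_def] using h14
      obtain ⟨hx, hlim⟩ := hclosed Φs (V g (x : H)) hcau hconv
      refine ⟨hx, ?_⟩
      have hlim1 : Filter.Tendsto
          (fun n => (p (Φs n - ⟨V g (x : H), hx⟩) (Φs n - ⟨V g (x : H), hx⟩)).re)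
          Filter.atTop (nhds 0) := by
        refine hlim.congr (fun n => ?_)
        rw [preq]
      have hA := p_diag_tendsto psym paddl paddr psmulr ppos ⟨V g (x : H), hx⟩ Φs hlim1
      have hlim2 : Filter.Tendsto (fun n => (p (Ψh n - x) (Ψh n - x)).re)
          Filter.atTop (nhds 0) := by
        apply squeeze_zero (g := fun n : ℕ => 1 / ((n : ℝ) + 1)) (fun n => ppos _)
        · intro n
          have hneg : (Ψh n - x : ↥D) = -(x - Ψh n) := by abel
          rw [hneg, p_neg_l psym psmulr, p_neg_r psmulr, neg_neg]
          exact le_of_lt (hΨs' n)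
        · exact tendsto_one_div_add_atTop_nhds_zero_nat
      have hB := p_diag_tendsto psym paddl paddr psmulr ppos x Ψh hlim2
      have hsame : ∀ n, (p (Φs n) (Φs n)).re = (p (Ψh n) (Ψh n)).re := fun n =>
        hpdiagT _ (Ψs n).2 _
      have hpeq : (p ⟨V g (x : H), hx⟩ ⟨V g (x : H), hx⟩).re = (p x x).re :=
        tendsto_nhds_unique (hA.congr fun n => hsame n) hB
      have hre : (q ⟨V g (x : H), hx⟩ ⟨V g (x : H), hx⟩).re = (q x x).re := by
        rw [pre, pre] at hpeq
        have h11 : ‖V g (x : H)‖ = ‖(x : H)‖ := (V g).norm_map _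
        rw [show ((⟨V g (x : H), hx⟩ : ↥D) : H) = V g (x : H) from rfl, h11] at hpeq
        linarith
      calc q ⟨V g (x : H), hx⟩ ⟨V g (x : H), hx⟩
          = (((q ⟨V g (x : H), hx⟩ ⟨V g (x : H), hx⟩).re : ℝ) : ℂ) :=
            (p_diag_real hherm _).symm
        _ = (((q x x).re : ℝ) : ℂ) := by rw [hre]
        _ = q x x := p_diag_real hherm x
    have hmem : ∀ x : ↥D, V g (x : H) ∈ D := fun x => (hmemdiag x).choose
    have hdiagD : ∀ (y : ↥D) (h : V g (y : H) ∈ D),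
        q ⟨V g (y : H), h⟩ ⟨V g (y : H), h⟩ = q y y := by
      intro y h
      obtain ⟨h0, he⟩ := hmemdiag y
      exact he
    refine ⟨fun x hx => hmem ⟨x, hx⟩, ?_⟩
    intro Φ Ψ hΦ hΨ
    rw [p_polarization hherm haddl haddr hsmulr (⟨V g (Φ : H), hΦ⟩ : ↥D) ⟨V g (Ψ : H), hΨ⟩,
      p_polarization hherm haddl haddr hsmulr Φ Ψ]
    have e1 : q (⟨V g (Φ : H), hΦ⟩ + ⟨V g (Ψ : H), hΨ⟩ : ↥D)
        (⟨V g (Φ : H), hΦ⟩ + ⟨V g (Ψ : H), hΨ⟩ : ↥D) = q (Φ + Ψ) (Φ + Ψ) := by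
      rw [show (⟨V g (Φ : H), hΦ⟩ + ⟨V g (Ψ : H), hΨ⟩ : ↥D)
          = ⟨V g ((Φ + Ψ : ↥D) : H), hmem (Φ + Ψ)⟩ from Subtype.ext (by simp [map_add])]
      exact hdiagD (Φ + Ψ) _
    have e2 : q (⟨V g (Φ : H), hΦ⟩ - ⟨V g (Ψ : H), hΨ⟩ : ↥D)
        (⟨V g (Φ : H), hΦ⟩ - ⟨V g (Ψ : H), hΨ⟩ : ↥D) = q (Φ - Ψ) (Φ - Ψ) := by
      rw [show (⟨V g (Φ : H), hΦ⟩ - ⟨V g (Ψ : H), hΨ⟩ : ↥D)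
          = ⟨V g ((Φ - Ψ : ↥D) : H), hmem (Φ - Ψ)⟩ from Subtype.ext (by simp [map_sub])]
      exact hdiagD (Φ - Ψ) _
    have e3 : q (⟨V g (Φ : H), hΦ⟩ + Complex.I • ⟨V g (Ψ : H), hΨ⟩ : ↥D)
        (⟨V g (Φ : H), hΦ⟩ + Complex.I • ⟨V g (Ψ : H), hΨ⟩ : ↥D)
        = q (Φ + Complex.I • Ψ) (Φ + Complex.I • Ψ) := by
      rw [show (⟨V g (Φ : H), hΦ⟩ + Complex.I • ⟨V g (Ψ : H), hΨ⟩ : ↥D)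
          = ⟨V g ((Φ + Complex.I • Ψ : ↥D) : H), hmem (Φ + Complex.I • Ψ)⟩ from
          Subtype.ext (by simp [map_add, map_smul])]
      exact hdiagD (Φ + Complex.I • Ψ) _
    have e4 : q (⟨V g (Φ : H), hΦ⟩ - Complex.I • ⟨V g (Ψ : H), hΨ⟩ : ↥D)
        (⟨V g (Φ : H), hΦ⟩ - Complex.I • ⟨V g (Ψ : H), hΨ⟩ : ↥D)
        = q (Φ - Complex.I • Ψ) (Φ - Complex.I • Ψ) := by
      rw [show (⟨V g (Φ : H), hΦ⟩ - Complex.I • ⟨V g (Ψ : H), hΨ⟩ : ↥D)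
          = ⟨V g ((Φ - Complex.I • Ψ : ↥D) : H), hmem (Φ - Complex.I • Ψ)⟩ from
          Subtype.ext (by simp [map_sub, map_smul])]
      exact hdiagD (Φ - Complex.I • Ψ) _
    rw [e1, e2, e3, e4]
end
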